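/- arXiv:0806.3920 — 9 statements merged into one kernel-verified Lean document; each statement's English description precedes it below -/
import Mathlib

section
/- Let f ∈ Γ₀(ℝ) and let C be a nonempty closed convex subset (interval) of ℝ with C ∩ dom f ≠ ∅. Then prox_{ι_C + f} = P_C ∘ prox_f, where P_C is the metric projection onto C. -/
open Set

/-- In dimension one, `prox_{ι_C + f} = P_C ∘ prox_f`. -/
theorem stmt_1 (f : ℝ → ℝ) (hf_conv : ConvexOn ℝ univ f) (hf_lsc : LowerSemicontinuous f)
    (C : Set ℝ) (hC_closed : IsClosed C) (hC_conv : Convex ℝ C) (hC_ne : C.Nonempty)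
    (x p q : ℝ)
    (hp : IsMinOn (fun y => (1/2) * |y - x|^2 + f y) univ p)
    (hqC : q ∈ C) (hq : IsMinOn (fun c => |c - p|) C q) :
    q ∈ C ∧ IsMinOn (fun y => (1/2) * |y - x|^2 + f y) C q := by
  have hq' : ∀ c ∈ C, |q - p| ≤ |c - p| := by
    rw [isMinOn_iff] at hq; exact hq
  have hp' : ∀ c : ℝ, (1/2) * |p - x|^2 + f p ≤ (1/2) * |c - x|^2 + f c := by
    rw [isMinOn_iff] at hp
    exact fun c => hp c (mem_univ c)
  have hquad : ConvexOn ℝ univ (fun y : ℝ => (1/2) * |y - x|^2) := by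
    refine ⟨convex_univ, ?_⟩
    intro y _ z _ a b ha hb hab
    simp only [smul_eq_mul, sq_abs]
    have hb' : b = 1 - a := by linarith
    subst hb'
    nlinarith [mul_nonneg (mul_nonneg ha hb) (sq_nonneg (y - z))]
  have hg : ConvexOn ℝ univ (fun y : ℝ => (1/2) * |y - x|^2 + f y) := hquad.add hf_conv
  refine ⟨hqC, ?_⟩
  rw [isMinOn_iff]
  intro c hc
  -- the auxiliary fact: if p ∈ C then q = p
  have hqp_of : p ∈ C → q = p := fun hpC => by
    have h := hq' p hpC
    simp only [sub_self, abs_zero] at h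
    exact sub_eq_zero.mp (abs_nonpos_iff.mp h)
  -- q lies between p and c
  have hkey : q ∈ uIcc p c := by
    rw [mem_uIcc]
    rcases le_or_gt p q with hpq | hpq
    · rcases le_or_gt q c with h | h
      · exact Or.inl ⟨hpq, h⟩
      · rcases le_or_gt p c with hpc | hcp
        · exfalso
          have := hq' c hc
          rw [abs_of_nonneg (sub_nonneg.mpr hpq), abs_of_nonneg (sub_nonneg.mpr hpc)] at this
          linarith
        · have hqp := hqp_of (hC_conv.ordConnected.out hc hqC ⟨hcp.le, hpq⟩)
          exact Or.inr ⟨h.le, hqp.le⟩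
    · rcases le_or_gt c q with h | h
      · exact Or.inr ⟨h, hpq.le⟩
      · rcases le_or_gt c p with hcp | hpc
        · exfalso
          have := hq' c hc
          rw [abs_sub_comm q p, abs_sub_comm c p,
            abs_of_nonneg (sub_nonneg.mpr hpq.le), abs_of_nonneg (sub_nonneg.mpr hcp)] at this
          linarith
        · have hqp := hqp_of (hC_conv.ordConnected.out hqC hc ⟨hpq.le, hpc.le⟩)
          exact Or.inl ⟨hqp.ge, (hqp ▸ h.le : q ≤ c)⟩
  have hle := hg.le_on_segment (mem_univ p) (mem_univ c)
    (by rw [segment_eq_uIcc]; exact hkey)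
  calc (1/2) * |q - x|^2 + f q
      ≤ max ((1/2) * |p - x|^2 + f p) ((1/2) * |c - x|^2 + f c) := hle
    _ ≤ (1/2) * |c - x|^2 + f c := max_le (hp' c) le_rfl
end

section
/- Let H = ℝ², Λ₁₂, Λ₂₂ ∈ ℝ with Λ₂₂ ≥ 0 and |Λ₁₂| ≤ √Λ₂₂, and f(x) = (1/2)xᵀΛx where Λ = [[1, Λ₁₂],[Λ₁₂, Λ₂₂]]. Let C = [−1,1]². For x = 2(Λ₁₂, 1+Λ₂₂)ᵀ, one has prox_f(x) = (0,2)ᵀ and therefore P_C(prox_f x) = (0,1)ᵀ. -/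
open Set

/-- For the quadratic `f(x) = (1/2) xᵀ Λ x` on ℝ² with `Λ = [[1, l12],[l12, l22]]`,
`C = [-1,1]²`, and `x = 2(l12, 1 + l22)`, one has `prox_f x = (0,2)` and
`P_C (prox_f x) = (0,1)`. -/
theorem stmt_2 (l12 l22 : ℝ) (h22 : 0 ≤ l22) (h12 : |l12| ≤ Real.sqrt l22) :
    -- prox_f x = (0, 2)
    (∀ a b : ℝ,
      (1/2) * ((0 - 2*l12)^2 + (2 - 2*(1 + l22))^2)
        + (1/2) * (0^2 + 2*l12*0*2 + l22*2^2)
      ≤ (1/2) * ((a - 2*l12)^2 + (b - 2*(1 + l22))^2)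
        + (1/2) * (a^2 + 2*l12*a*b + l22*b^2)) ∧
    -- P_C (0,2) = (0,1)
    ((0:ℝ) ∈ Icc (-1:ℝ) 1 ∧ (1:ℝ) ∈ Icc (-1:ℝ) 1 ∧
      ∀ a ∈ Icc (-1:ℝ) 1, ∀ b ∈ Icc (-1:ℝ) 1,
        ((0:ℝ) - 0)^2 + ((1:ℝ) - 2)^2 ≤ (a - 0)^2 + (b - 2)^2) := by
  have hl : l12^2 ≤ l22 := by
    have := Real.sq_sqrt h22
    nlinarith [sq_abs l12, sq_nonneg (|l12| - Real.sqrt l22), Real.sqrt_nonneg l22, abs_nonneg l12]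
  refine ⟨fun a b => ?_, ⟨by norm_num, by norm_num⟩, by norm_num, fun a ha b hb => ?_⟩
  · nlinarith [sq_nonneg (2*a + l12*(b-2)), sq_nonneg (b-2), sq_nonneg (l12*(b-2))]
  · obtain ⟨_, _⟩ := ha; obtain ⟨_, _⟩ := hb
    nlinarith [sq_nonneg a, sq_nonneg (b-2)]
end

section
/- Let H = ℝ², Λ₁₂ ∈ [−2,2], Λ₂₂ ≥ 0 with |Λ₁₂| ≤ √Λ₂₂, and f(x) = (1/2)xᵀΛx where Λ = [[1, Λ₁₂],[Λ₁₂, Λ₂₂]]. Let C = [−1,1]² and x = 2(Λ₁₂, 1+Λ₂₂)ᵀ. Then prox_{ι_C + f}(x) = (Λ₁₂/2, 1)ᵀ. In particular, if Λ₁₂ ≠ 0, then prox_{ι_C+f}(x) ≠ P_C(prox_f x), so the identity prox_{ι_C+f} = P_C ∘ prox_f fails in dimension ≥ 2. -/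
open Set

/-- For the quadratic `f(x) = (1/2) xᵀ Λ x` on ℝ² with `Λ = [[1, l12],[l12, l22]]`,
`l12 ∈ [-2,2]`, `C = [-1,1]²` and `x = 2(l12, 1 + l22)`, one has
`prox_{ι_C + f} x = (l12/2, 1)`; in particular, if `l12 ≠ 0` this differs from
`P_C (prox_f x) = (0,1)`, so `prox_{ι_C+f} = P_C ∘ prox_f` fails in dimension ≥ 2. -/
theorem stmt_3 (l12 l22 : ℝ) (h22 : 0 ≤ l22) (h12 : |l12| ≤ Real.sqrt l22)
    (h12' : l12 ∈ Icc (-2:ℝ) 2) :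
    -- prox_{ι_C + f} x = (l12/2, 1)
    (l12/2 ∈ Icc (-1:ℝ) 1 ∧ (1:ℝ) ∈ Icc (-1:ℝ) 1 ∧
      ∀ a ∈ Icc (-1:ℝ) 1, ∀ b ∈ Icc (-1:ℝ) 1,
        (1/2) * ((l12/2 - 2*l12)^2 + (1 - 2*(1 + l22))^2)
          + (1/2) * ((l12/2)^2 + 2*l12*(l12/2)*1 + l22*1^2)
        ≤ (1/2) * ((a - 2*l12)^2 + (b - 2*(1 + l22))^2)
          + (1/2) * (a^2 + 2*l12*a*b + l22*b^2)) ∧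
    -- if l12 ≠ 0, prox_{ι_C+f} x ≠ P_C (prox_f x) = (0,1)
    (l12 ≠ 0 → (l12/2, (1:ℝ)) ≠ ((0:ℝ), (1:ℝ))) := by
  obtain ⟨hl, hr⟩ := h12'
  have hsq : l12^2 ≤ l22 := by
    nlinarith [Real.sq_sqrt h22, sq_abs l12, mul_self_le_mul_self (abs_nonneg l12) h12]
  refine ⟨⟨⟨by linarith, by linarith⟩, ⟨by norm_num, by norm_num⟩, ?_⟩, ?_⟩
  · intro a ⟨ha1, ha2⟩ b ⟨hb1, hb2⟩
    nlinarith [sq_nonneg (a - l12/2 + l12*(b-1)/2), sq_nonneg (b-1),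
      mul_nonneg (mul_nonneg (sub_nonneg.2 hb2) (by linarith : (0:ℝ) ≤ 1 + l22 - l12^2/2)) (sub_nonneg.2 hb2),
      mul_nonneg (sub_nonneg.2 hb2) (by linarith : (0:ℝ) ≤ 1 + l22 - l12^2/2)]
  · intro h heq
    exact h (by field_simp at heq; simpa using heq)
end

section
/- Let H, G be real Hilbert spaces, f ∈ Γ₀(G), and L : H → G a bounded linear operator with L ∘ L* = ν·Id for some ν > 0. Then f ∘ L ∈ Γ₀(H) and prox_{f∘L} = Id + ν⁻¹ L* ∘ (prox_{νf} − Id) ∘ L. -/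
open Set

/-!
Since `L L* = ν Id`, the operator `ν^{-1/2} L*` is an isometry and `ν^{-1/2} L` a contraction.
With `p = prox_{νf}(L x)`, the point `y₀ = x + ν⁻¹ L*(p − L x)` satisfies `L y₀ = p` and
`‖y₀ − x‖² = ν⁻¹ ‖p − L x‖²`, so for every `y`
`ν (½‖y₀ − x‖² + f(L y₀)) = ½‖p − L x‖² + ν f p ≤ ½‖L y − L x‖² + ν f(L y) ≤ ν (½‖y − x‖² + f(L y))`,
the last step by the contraction bound `‖L(y − x)‖² ≤ ν ‖y − x‖²`.
-/

/-- `p = prox_g x`. -/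
def IsProxPoint {E : Type*} [NormedAddCommGroup E] (g : E → ℝ) (x p : E) : Prop :=
  IsMinOn (fun y => (1/2) * ‖y - x‖^2 + g y) univ p

namespace ContinuousLinearMap

variable {H G : Type*} [NormedAddCommGroup H] [InnerProductSpace ℝ H] [CompleteSpace H]
  [NormedAddCommGroup G] [InnerProductSpace ℝ G] [CompleteSpace G]
  {L : H →L[ℝ] G} {ν : ℝ}

theorem norm_adjoint_sq_of_comp_adjoint (hL : ∀ u : G, L (L.adjoint u) = ν • u) (u : G) :
    ‖L.adjoint u‖ ^ 2 = ν * ‖u‖ ^ 2 := by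
  rw [← real_inner_self_eq_norm_sq, ← real_inner_self_eq_norm_sq, adjoint_inner_left, hL,
    real_inner_smul_right]

theorem norm_apply_sq_le_of_comp_adjoint (hν : 0 ≤ ν) (hL : ∀ u : G, L (L.adjoint u) = ν • u)
    (z : H) : ‖L z‖ ^ 2 ≤ ν * ‖z‖ ^ 2 := by
  have hadj : ‖L.adjoint‖ ≤ √ν := by
    refine opNorm_le_bound _ (Real.sqrt_nonneg ν) fun u => le_of_eq ?_
    rw [← Real.sqrt_sq (norm_nonneg _), norm_adjoint_sq_of_comp_adjoint hL, Real.sqrt_mul hν,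
      Real.sqrt_sq (norm_nonneg _)]
  have hLz : ‖L z‖ ≤ √ν * ‖z‖ :=
    (L.le_opNorm z).trans <| by
      gcongr
      rwa [← adjoint.norm_map L]
  calc ‖L z‖ ^ 2 ≤ (√ν * ‖z‖) ^ 2 := by gcongr
    _ = ν * ‖z‖ ^ 2 := by rw [mul_pow, Real.sq_sqrt hν]

theorem isProxPoint_comp_of_comp_adjoint (hν : 0 < ν) (hL : ∀ u : G, L (L.adjoint u) = ν • u)
    {f : G → ℝ} {x : H} {p : G} (hp : IsProxPoint (fun u => ν * f u) (L x) p) :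
    IsProxPoint (fun y => f (L y)) x (x + ν⁻¹ • L.adjoint (p - L x)) := by
  set y₀ := x + ν⁻¹ • L.adjoint (p - L x)
  have hLy₀ : L y₀ = p := by
    rw [map_add, map_smul, hL, smul_smul, inv_mul_cancel₀ hν.ne', one_smul, add_sub_cancel]
  have hdist : ‖y₀ - x‖ ^ 2 = ν⁻¹ * ‖p - L x‖ ^ 2 := by
    rw [add_sub_cancel_left, norm_smul, mul_pow, norm_adjoint_sq_of_comp_adjoint hL,
      Real.norm_of_nonneg (inv_nonneg.2 hν.le)]
    field_simp
  refine isMinOn_univ_iff.2 fun y => ?_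
  calc 1/2 * ‖y₀ - x‖ ^ 2 + f (L y₀) = ν⁻¹ * (1/2 * ‖p - L x‖ ^ 2 + ν * f p) := by
        rw [hLy₀, hdist]; field_simp
    _ ≤ ν⁻¹ * (1/2 * ‖L y - L x‖ ^ 2 + ν * f (L y)) :=
        mul_le_mul_of_nonneg_left (isMinOn_univ_iff.1 hp (L y)) (by positivity)
    _ ≤ ν⁻¹ * (1/2 * (ν * ‖y - x‖ ^ 2) + ν * f (L y)) := by
        gcongr; simpa only [map_sub] using norm_apply_sq_le_of_comp_adjoint hν.le hL (y - x)
    _ = 1/2 * ‖y - x‖ ^ 2 + f (L y) := by field_simp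

end ContinuousLinearMap

/-- If `L ∘ L* = ν Id` with `ν > 0` and `f ∈ Γ₀(G)`, then `f ∘ L ∈ Γ₀(H)` and
`prox_{f∘L} = Id + ν⁻¹ L* ∘ (prox_{νf} − Id) ∘ L`. -/
theorem stmt_8 {H G : Type*} [NormedAddCommGroup H] [InnerProductSpace ℝ H]
    [CompleteSpace H] [NormedAddCommGroup G] [InnerProductSpace ℝ G] [CompleteSpace G]
    (f : G → ℝ) (hf_conv : ConvexOn ℝ univ f) (hf_lsc : LowerSemicontinuous f)
    (L : H →L[ℝ] G) (ν : ℝ) (hν : 0 < ν)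
    (hL : ∀ u : G, L (L.adjoint u) = ν • u) :
    (ConvexOn ℝ univ (fun x => f (L x)) ∧ LowerSemicontinuous (fun x => f (L x))) ∧
    ∀ x : H, ∀ p : G,
      IsMinOn (fun u => (1/2) * ‖u - L x‖^2 + ν * f u) univ p →
      IsMinOn (fun y => (1/2) * ‖y - x‖^2 + f (L y)) univ
        (x + ν⁻¹ • L.adjoint (p - L x)) :=
  ⟨⟨hf_conv.comp_linearMap L.toLinearMap, hf_lsc.comp L.continuous⟩,
    fun _ _ hp => L.isProxPoint_comp_of_comp_adjoint hν hL hp⟩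
end

section
/- Let H be a real Hilbert space, f₁, f₂ ∈ Γ₀(H) with Argmin(f₁+f₂) ≠ ∅, f₂ differentiable with β-Lipschitz gradient (β > 0), and f₁ strongly convex with modulus ϑ > 0. Consider the exact forward–backward iteration x_{n+1} = x_n + λ_n(prox_{γ_n f₁}(x_n − γ_n ∇f₂(x_n)) − x_n), with 0 < γ̲ ≤ γ_n ≤ γ̄ < 2/β and 0 < λ̲ ≤ λ_n ≤ 1 for all n. Then for the unique minimizer x̃ of f₁+f₂, one has ‖x_n − x̃‖ ≤ (1 − λ̲γ̲ϑ/(1 + γ̲ϑ))ⁿ ‖x₀ − x̃‖ for all n, i.e. the iterates converge linearly to x̃. -/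
/-!
The forward–backward map `T = prox_{γ f₁} ∘ (Id - γ ∇f₂)` fixes the minimizer `x̃` (Fermat's rule).
The forward step is nonexpansive because `∇f₂` is `1/β`-cocoercive (Baillon–Haddad, obtained from
the descent lemma), and the proximal step is a `(1 + γϑ)⁻¹`-contraction because the proximal
objective is `(1 + γϑ)`-strongly convex, hence grows quadratically away from its minimizer.
The relaxed step `x + λ (T x - x)` therefore contracts the distance to `x̃` by
`1 - λ + λ / (1 + γϑ) ≤ 1 - λ̲ γ̲ ϑ / (1 + γ̲ ϑ)`.
-/

open Set
open scoped RealInnerProductSpace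

theorem le_of_hasDerivAt_of_forall_le {g : ℝ → ℝ} {g' c : ℝ} (hg : HasDerivAt g g' 0)
    (h : ∀ t ∈ Icc (0 : ℝ) 1, g t ≤ g 0 + t * c) : g' ≤ c := by
  have hmin : IsLocalMinOn (fun t => g 0 + t * c - g t) (Icc 0 1) 0 :=
    IsMinOn.localize fun t ht => by simpa using h t ht
  have hd : HasDerivAt (fun t => g 0 + t * c - g t) (c - g') 0 :=
    ((hasDerivAt_mul_const c).const_add (g 0)).sub hg
  have h1 : (1 : ℝ) ∈ posTangentConeAt (Icc (0 : ℝ) 1) 0 :=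
    mem_posTangentConeAt_of_segment_subset (by simp [segment_eq_Icc])
  simpa using hmin.hasFDerivWithinAt_nonneg hd.hasDerivWithinAt.hasFDerivWithinAt h1

theorem one_sub_add_div_le {l l₀ s s₀ : ℝ} (hl₀ : 0 ≤ l₀) (hl : l₀ ≤ l) (hs₀ : 0 ≤ s₀)
    (hs : s₀ ≤ s) : 1 - l + l / (1 + s) ≤ 1 - l₀ * s₀ / (1 + s₀) := by
  have hsplit : 1 - l + l / (1 + s) = 1 - l * (s / (1 + s)) := by
    have : 1 + s ≠ 0 := by linarith
    field_simp
    ring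
  have hfrac : s₀ / (1 + s₀) ≤ s / (1 + s) := by
    rw [div_le_div_iff₀ (by positivity) (by linarith)]
    linarith
  rw [hsplit, mul_div_assoc]
  gcongr
  linarith

section NormedSpace

variable {E : Type*} [NormedAddCommGroup E] [NormedSpace ℝ E]

theorem StrongConvexOn.add_le_of_isMinOn {s : Set E} {f : E → ℝ} {m : ℝ} {p y : E}
    (hf : StrongConvexOn s m f) (hp : IsMinOn f s p) (hps : p ∈ s) (hy : y ∈ s) :
    f p + m / 2 * ‖y - p‖ ^ 2 ≤ f y := by
  have hd : HasDerivAt (fun t : ℝ => (1 - t) * t * (m / 2 * ‖y - p‖ ^ 2))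
      (m / 2 * ‖y - p‖ ^ 2) 0 := by
    simpa using (((hasDerivAt_id (0 : ℝ)).const_sub 1).mul (hasDerivAt_id 0)).mul_const _
  suffices m / 2 * ‖y - p‖ ^ 2 ≤ f y - f p by linarith
  refine le_of_hasDerivAt_of_forall_le hd fun t ht => ?_
  simp only [sub_zero, zero_mul, mul_zero, zero_add]
  have hmem : (1 - t) • p + t • y ∈ s :=
    hf.1 hps hy (sub_nonneg.2 ht.2) ht.1 (sub_add_cancel 1 t)
  have := (hp hmem).trans (hf.2 hps hy (sub_nonneg.2 ht.2) ht.1 (sub_add_cancel 1 t))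
  rw [smul_eq_mul, smul_eq_mul, norm_sub_rev] at this
  linarith

theorem StrongConvexOn.const_mul {s : Set E} {f : E → ℝ} {m c : ℝ} (hf : StrongConvexOn s m f)
    (hc : 0 ≤ c) : StrongConvexOn s (c * m) fun x => c * f x := by
  refine ⟨hf.1, fun x hx y hy a b ha hb hab => ?_⟩
  have := mul_le_mul_of_nonneg_left (hf.2 hx hy ha hb hab) hc
  simp only [smul_eq_mul] at this ⊢
  linarith

theorem norm_add_smul_sub_le {x p z : E} {l c : ℝ} (hl₀ : 0 ≤ l) (hl₁ : l ≤ 1)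
    (hp : ‖p - z‖ ≤ c * ‖x - z‖) :
    ‖x + l • (p - x) - z‖ ≤ (1 - l + l * c) * ‖x - z‖ := by
  have hsplit : x + l • (p - x) - z = (1 - l) • (x - z) + l • (p - z) := by module
  calc ‖x + l • (p - x) - z‖ ≤ ‖(1 - l) • (x - z)‖ + ‖l • (p - z)‖ := by
        rw [hsplit]; exact norm_add_le _ _
    _ = (1 - l) * ‖x - z‖ + l * ‖p - z‖ := by
        rw [norm_smul, norm_smul, Real.norm_of_nonneg (by linarith), Real.norm_of_nonneg hl₀]
    _ ≤ (1 - l) * ‖x - z‖ + l * (c * ‖x - z‖) := by gcongr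
    _ = (1 - l + l * c) * ‖x - z‖ := by ring

end NormedSpace

section InnerProductSpace

variable {H : Type*} [NormedAddCommGroup H] [InnerProductSpace ℝ H]

def IsProx (f : H → ℝ) (z p : H) : Prop :=
  IsMinOn (fun y => 1 / 2 * ‖y - z‖ ^ 2 + f y) univ p

theorem StrongConvexOn.half_sq_norm_sub_add {f : H → ℝ} {a : ℝ} (hf : StrongConvexOn univ a f)
    (z : H) : StrongConvexOn univ (1 + a) fun y => 1 / 2 * ‖y - z‖ ^ 2 + f y := by
  rw [strongConvexOn_iff_convex] at hf ⊢
  refine (hf.add (((innerSL ℝ (-z)).toLinearMap.convexOn convex_univ).add_const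
    (1 / 2 * ‖z‖ ^ 2))).congr fun y _ => ?_
  simp only [Pi.add_apply, ContinuousLinearMap.coe_coe, innerSL_apply_apply, inner_neg_left,
    norm_sub_sq_real, real_inner_comm]
  ring

theorem IsProx.mul_norm_sub_le {f : H → ℝ} {a : ℝ} (hf : StrongConvexOn univ a f) {z z' p p' : H}
    (hp : IsProx f z p) (hp' : IsProx f z' p') : (1 + a) * ‖p - p'‖ ≤ ‖z - z'‖ := by
  have hgrow := (hf.half_sq_norm_sub_add z).add_le_of_isMinOn hp (mem_univ _) (mem_univ p')
  have hgrow' := (hf.half_sq_norm_sub_add z').add_le_of_isMinOn hp' (mem_univ _) (mem_univ p)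
  have hpolar : ‖p' - z‖ ^ 2 - ‖p - z‖ ^ 2 + ‖p - z'‖ ^ 2 - ‖p' - z'‖ ^ 2
      = 2 * ⟪p - p', z - z'⟫ := by
    simp only [norm_sub_sq_real, inner_sub_left, inner_sub_right, real_inner_comm]
    ring
  rw [norm_sub_rev p' p] at hgrow
  have hsq : (1 + a) * ‖p - p'‖ * ‖p - p'‖ ≤ ‖z - z'‖ * ‖p - p'‖ := by
    nlinarith [real_inner_le_norm (p - p') (z - z')]
  rcases (norm_nonneg (p - p')).eq_or_lt with h0 | hpos
  · simp [← h0]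
  · exact le_of_mul_le_mul_right hsq hpos

variable [CompleteSpace H]

theorem HasGradientAt.hasDerivAt_comp_add_smul {f : H → ℝ} {v x d : H} {t : ℝ}
    (hf : HasGradientAt f v (x + t • d)) :
    HasDerivAt (fun s : ℝ => f (x + s • d)) ⟪v, d⟫ t := by
  have hline : HasDerivAt (fun s : ℝ => x + s • d) d t := by
    simpa using ((hasDerivAt_id t).smul_const d).const_add x
  exact (hasGradientAt_iff_hasFDerivAt.1 hf).comp_hasDerivAt t hline

theorem ConvexOn.add_inner_le_of_hasGradientAt {f : H → ℝ} {v x : H} (hf : ConvexOn ℝ univ f)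
    (hv : HasGradientAt f v x) (y : H) : f x + ⟪v, y - x⟫ ≤ f y := by
  have hd := (show HasGradientAt f v (x + (0 : ℝ) • (y - x)) by simpa using hv)
    |>.hasDerivAt_comp_add_smul
  suffices ⟪v, y - x⟫ ≤ f y - f x by linarith
  refine le_of_hasDerivAt_of_forall_le hd fun t ht => ?_
  have := hf.2 (mem_univ x) (mem_univ y) (sub_nonneg.2 ht.2) ht.1 (sub_add_cancel 1 t)
  rw [show (1 - t) • x + t • y = x + t • (y - x) by module, smul_eq_mul, smul_eq_mul] at this
  simp only [zero_smul, add_zero]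
  linarith

theorem ConvexOn.le_add_inner_of_isMinOn_add {f₁ f₂ : H → ℝ} {v x : H}
    (hf₁ : ConvexOn ℝ univ f₁) (hv : HasGradientAt f₂ v x)
    (hx : IsMinOn (fun y => f₁ y + f₂ y) univ x) (y : H) : f₁ x ≤ f₁ y + ⟪v, y - x⟫ := by
  have hd : HasDerivAt (fun s : ℝ => -f₂ (x + s • (y - x))) (-⟪v, y - x⟫) 0 :=
    (show HasGradientAt f₂ v (x + (0 : ℝ) • (y - x)) by simpa using hv)
      |>.hasDerivAt_comp_add_smul.neg
  suffices -⟪v, y - x⟫ ≤ f₁ y - f₁ x by linarith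
  refine le_of_hasDerivAt_of_forall_le hd fun t ht => ?_
  have hconv := hf₁.2 (mem_univ x) (mem_univ y) (sub_nonneg.2 ht.2) ht.1 (sub_add_cancel 1 t)
  rw [show (1 - t) • x + t • y = x + t • (y - x) by module, smul_eq_mul, smul_eq_mul] at hconv
  have hmin := hx (mem_univ (x + t • (y - x)))
  simp only [mem_ofPred_eq, zero_smul, add_zero] at hmin ⊢
  linarith

theorem le_add_inner_add_sq_of_lipschitzWith_gradient {f : H → ℝ} {g : H → H} {β : NNReal}
    (hg : ∀ x, HasGradientAt f (g x) x) (hlip : LipschitzWith β g) (x d : H) :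
    f (x + d) ≤ f x + ⟪g x, d⟫ + β / 2 * ‖d‖ ^ 2 := by
  set φ : ℝ → ℝ := fun t => f (x + t • d) - t * ⟪g x, d⟫ - β / 2 * t ^ 2 * ‖d‖ ^ 2
  have hφ (t : ℝ) : HasDerivAt φ (⟪g (x + t • d), d⟫ - ⟪g x, d⟫ - β * t * ‖d‖ ^ 2) t := by
    have hpow : HasDerivAt (fun s : ℝ => β / 2 * s ^ 2 * ‖d‖ ^ 2) (β * t * ‖d‖ ^ 2) t :=
      (((hasDerivAt_pow 2 t).const_mul (β / 2 : ℝ)).mul_const (‖d‖ ^ 2)).congr_deriv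
        (by push_cast; ring)
    exact (((hg _).hasDerivAt_comp_add_smul).sub (hasDerivAt_mul_const _)).sub hpow
  have hslope : ∀ t ∈ interior (Ici (0 : ℝ)),
      ⟪g (x + t • d), d⟫ - ⟪g x, d⟫ - β * t * ‖d‖ ^ 2 ≤ 0 := by
    intro t ht
    rw [interior_Ici, mem_Ioi] at ht
    rw [sub_nonpos]
    calc ⟪g (x + t • d), d⟫ - ⟪g x, d⟫ = ⟪g (x + t • d) - g x, d⟫ := (inner_sub_left ..).symm
      _ ≤ ‖g (x + t • d) - g x‖ * ‖d‖ := real_inner_le_norm _ _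
      _ ≤ β * ‖(x + t • d) - x‖ * ‖d‖ := by gcongr; exact hlip.norm_sub_le _ _
      _ = β * t * ‖d‖ ^ 2 := by
        rw [add_sub_cancel_left, norm_smul, Real.norm_of_nonneg ht.le]; ring
  have hanti := antitoneOn_of_hasDerivWithinAt_nonpos (convex_Ici 0)
    (HasDerivAt.continuousOn fun t _ => hφ t) (fun t _ => (hφ t).hasDerivWithinAt) hslope
  have := hanti (mem_Ici.2 le_rfl) (mem_Ici.2 zero_le_one) zero_le_one
  simp only [φ, zero_smul, add_zero, one_smul, zero_mul, sub_zero, one_mul, one_pow, mul_one,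
    ne_eq, OfNat.ofNat_ne_zero, not_false_eq_true, zero_pow] at this
  linarith

theorem ConvexOn.add_inner_add_sq_le_of_lipschitzWith_gradient {f : H → ℝ} {g : H → H}
    {β : NNReal} (hf : ConvexOn ℝ univ f) (hg : ∀ x, HasGradientAt f (g x) x) (hβ : 0 < (β : ℝ))
    (hlip : LipschitzWith β g) (x y : H) :
    f x + ⟪g x, y - x⟫ + 1 / (2 * β) * ‖g y - g x‖ ^ 2 ≤ f y := by
  set w := g y - g x
  -- compare `f` at `x` and at `y` through the gradient step `y - β⁻¹ w`
  have hlow := hf.add_inner_le_of_hasGradientAt (hg x) (y + (-(β : ℝ)⁻¹) • w)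
  have hup := le_add_inner_add_sq_of_lipschitzWith_gradient hg hlip y ((-(β : ℝ)⁻¹) • w)
  rw [add_sub_right_comm, inner_add_right, real_inner_smul_right] at hlow
  rw [real_inner_smul_right, norm_smul, mul_pow, Real.norm_eq_abs, sq_abs] at hup
  have hw : ⟪g y, w⟫ - ⟪g x, w⟫ = ‖w‖ ^ 2 := by
    rw [← inner_sub_left, real_inner_self_eq_norm_sq]
  have hβ' : (β : ℝ) / 2 * (-(β : ℝ)⁻¹) ^ 2 = 1 / (2 * β) := by
    field_simp
  linear_combination hlow + hup - (β : ℝ)⁻¹ * hw + ‖w‖ ^ 2 * hβ'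

theorem ConvexOn.sq_norm_sub_le_inner_of_lipschitzWith_gradient {f : H → ℝ} {g : H → H}
    {β : NNReal} (hf : ConvexOn ℝ univ f) (hg : ∀ x, HasGradientAt f (g x) x) (hβ : 0 < (β : ℝ))
    (hlip : LipschitzWith β g) (x y : H) :
    ‖g x - g y‖ ^ 2 ≤ β * ⟪g x - g y, x - y⟫ := by
  have hxy := hf.add_inner_add_sq_le_of_lipschitzWith_gradient hg hβ hlip x y
  have hyx := hf.add_inner_add_sq_le_of_lipschitzWith_gradient hg hβ hlip y x
  rw [norm_sub_rev] at hxy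
  have hsum : ⟪g x - g y, x - y⟫ = -⟪g x, y - x⟫ - ⟪g y, x - y⟫ := by
    simp only [inner_sub_left, inner_sub_right]
    ring
  have hhalf : (β : ℝ) * (1 / (2 * β)) = 1 / 2 := by
    field_simp
  nlinarith

theorem ConvexOn.norm_sub_smul_gradient_sub_le {f : H → ℝ} {g : H → H} {β : NNReal}
    (hf : ConvexOn ℝ univ f) (hg : ∀ x, HasGradientAt f (g x) x) (hβ : 0 < (β : ℝ))
    (hlip : LipschitzWith β g) {γ : ℝ} (hγ : 0 ≤ γ) (hγβ : γ ≤ 2 / β) (x y : H) :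
    ‖(x - γ • g x) - (y - γ • g y)‖ ≤ ‖x - y‖ := by
  have hco := hf.sq_norm_sub_le_inner_of_lipschitzWith_gradient hg hβ hlip x y
  have hmono : 0 ≤ ⟪g x - g y, x - y⟫ :=
    nonneg_of_mul_nonneg_right ((sq_nonneg _).trans hco) hβ
  have hγβ' : γ * β ≤ 2 := (le_div_iff₀ hβ).1 hγβ
  rw [show (x - γ • g x) - (y - γ • g y) = (x - y) - γ • (g x - g y) by module]
  refine (sq_le_sq₀ (norm_nonneg _) (norm_nonneg _)).1 ?_
  rw [norm_sub_sq_real, real_inner_smul_right, norm_smul, mul_pow, Real.norm_of_nonneg hγ,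
    real_inner_comm]
  nlinarith [mul_le_mul_of_nonneg_left hco (sq_nonneg γ),
    mul_le_mul_of_nonneg_right hγβ' (mul_nonneg hγ hmono)]

theorem isProx_sub_smul_of_isMinOn_add {f₁ f₂ : H → ℝ} {v x : H} (hf₁ : ConvexOn ℝ univ f₁)
    (hv : HasGradientAt f₂ v x) (hx : IsMinOn (fun y => f₁ y + f₂ y) univ x) {γ : ℝ}
    (hγ : 0 ≤ γ) : IsProx (fun y => γ * f₁ y) (x - γ • v) x := by
  intro y _
  have hF := hf₁.le_add_inner_of_isMinOn_add hv hx y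
  simp only [mem_ofPred_eq]
  rw [show y - (x - γ • v) = (y - x) + γ • v by abel,
    show x - (x - γ • v) = γ • v by abel, norm_add_sq_real, real_inner_smul_right,
    real_inner_comm]
  nlinarith [mul_le_mul_of_nonneg_left hF hγ, sq_nonneg ‖y - x‖]

theorem norm_forwardBackward_sub_le {f₁ f₂ : H → ℝ} {g : H → H} {β : NNReal} {ϑ γ l : ℝ}
    {x p xt : H} (hf₁ : StrongConvexOn univ ϑ f₁) (hϑ : 0 ≤ ϑ) (hf₂ : ConvexOn ℝ univ f₂)
    (hg : ∀ x, HasGradientAt f₂ (g x) x) (hβ : 0 < (β : ℝ)) (hlip : LipschitzWith β g)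
    (hxt : IsMinOn (fun y => f₁ y + f₂ y) univ xt) (hγ : 0 ≤ γ) (hγβ : γ ≤ 2 / β)
    (hl₀ : 0 ≤ l) (hl₁ : l ≤ 1) (hp : IsProx (fun y => γ * f₁ y) (x - γ • g x) p) :
    ‖x + l • (p - x) - xt‖ ≤ (1 - l + l / (1 + γ * ϑ)) * ‖x - xt‖ := by
  have hfix := isProx_sub_smul_of_isMinOn_add (hf₁.convexOn fun r => by
    simp only [Pi.zero_apply]; positivity) (hg xt) hxt hγ
  have hcontr : (1 + γ * ϑ) * ‖p - xt‖ ≤ ‖x - xt‖ :=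
    (hp.mul_norm_sub_le (hf₁.const_mul hγ) hfix).trans
      (hf₂.norm_sub_smul_gradient_sub_le hg hβ hlip hγ hγβ x xt)
  rw [div_eq_mul_inv]
  refine norm_add_smul_sub_le hl₀ hl₁ ?_
  rw [inv_mul_eq_div, le_div_iff₀ (by positivity), mul_comm]
  exact hcontr

end InnerProductSpace

theorem stmt_9_general {H : Type*} [NormedAddCommGroup H] [InnerProductSpace ℝ H]
    [CompleteSpace H]
    (f₁ f₂ : H → ℝ)
    (ϑ : ℝ) (hϑ : 0 < ϑ)
    (hf₁_strong : ConvexOn ℝ univ (fun y => f₁ y - ϑ/2 * ‖y‖^2))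
    (hf₂_conv : ConvexOn ℝ univ f₂)
    (gr : H → H) (hgrad : ∀ x, HasGradientAt f₂ (gr x) x)
    (β : NNReal) (hβ : 0 < (β:ℝ)) (hlip : LipschitzWith β gr)
    (xt : H) (hxt : IsMinOn (fun y => f₁ y + f₂ y) univ xt)
    (γ lam : ℕ → ℝ) (γlb γub llb : ℝ)
    (hγlb : 0 < γlb) (hγ : ∀ n, γlb ≤ γ n ∧ γ n ≤ γub) (hγub : γub < 2 / β)
    (hllb : 0 < llb) (hlam : ∀ n, llb ≤ lam n ∧ lam n ≤ 1)
    (x p : ℕ → H)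
    (hprox : ∀ n, IsMinOn
      (fun y => (1/2) * ‖y - (x n - γ n • gr (x n))‖^2 + γ n * f₁ y) univ (p n))
    (hiter : ∀ n, x (n+1) = x n + lam n • (p n - x n)) :
    ∀ n, ‖x n - xt‖ ≤ (1 - llb * γlb * ϑ / (1 + γlb * ϑ))^n * ‖x 0 - xt‖ := by
  have hf₁ : StrongConvexOn univ ϑ f₁ := strongConvexOn_iff_convex.2 hf₁_strong
  have hcoef (n : ℕ) :
      1 - lam n + lam n / (1 + γ n * ϑ) ≤ 1 - llb * γlb * ϑ / (1 + γlb * ϑ) := by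
    rw [mul_assoc llb]
    exact one_sub_add_div_le hllb.le (hlam n).1 (by positivity)
      (mul_le_mul_of_nonneg_right (hγ n).1 hϑ.le)
  have hstep (n : ℕ) :
      ‖x (n + 1) - xt‖ ≤ (1 - llb * γlb * ϑ / (1 + γlb * ϑ)) * ‖x n - xt‖ := by
    rw [hiter]
    refine (norm_forwardBackward_sub_le hf₁ hϑ.le hf₂_conv hgrad hβ hlip hxt
      (hγlb.le.trans (hγ n).1) ((hγ n).2.trans hγub.le) (hllb.le.trans (hlam n).1) (hlam n).2
      (hprox n)).trans ?_
    gcongr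
    exact hcoef n
  have hrate : 0 ≤ 1 - llb * γlb * ϑ / (1 + γlb * ϑ) := by
    have hγ₀ : 0 ≤ γ 0 := hγlb.le.trans (hγ 0).1
    refine (hcoef 0).trans' (add_nonneg (sub_nonneg.2 (hlam 0).2) ?_)
    exact div_nonneg (hllb.le.trans (hlam 0).1) (by positivity)
  exact fun n => le_geom (u := fun k => ‖x k - xt‖) hrate n fun k _ => hstep k

/-- Linear convergence of the exact forward–backward algorithm when `f₁` is
strongly convex with modulus `ϑ`. -/
theorem stmt_9 {H : Type*} [NormedAddCommGroup H] [InnerProductSpace ℝ H]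
    [CompleteSpace H]
    (f₁ f₂ : H → ℝ)
    (hf₁_lsc : LowerSemicontinuous f₁)
    (ϑ : ℝ) (hϑ : 0 < ϑ)
    (hf₁_strong : ConvexOn ℝ univ (fun y => f₁ y - ϑ/2 * ‖y‖^2))
    (hf₂_conv : ConvexOn ℝ univ f₂)
    (gr : H → H) (hgrad : ∀ x, HasGradientAt f₂ (gr x) x)
    (β : NNReal) (hβ : 0 < (β:ℝ)) (hlip : LipschitzWith β gr)
    (xt : H) (hxt : IsMinOn (fun y => f₁ y + f₂ y) univ xt)
    (γ lam : ℕ → ℝ) (γlb γub llb : ℝ)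
    (hγlb : 0 < γlb) (hγ : ∀ n, γlb ≤ γ n ∧ γ n ≤ γub) (hγub : γub < 2 / β)
    (hllb : 0 < llb) (hlam : ∀ n, llb ≤ lam n ∧ lam n ≤ 1)
    (x p : ℕ → H)
    (hprox : ∀ n, IsMinOn
      (fun y => (1/2) * ‖y - (x n - γ n • gr (x n))‖^2 + γ n * f₁ y) univ (p n))
    (hiter : ∀ n, x (n+1) = x n + lam n • (p n - x n)) :
    ∀ n, ‖x n - xt‖ ≤ (1 - llb * γlb * ϑ / (1 + γlb * ϑ))^n * ‖x 0 - xt‖ :=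
  stmt_9_general f₁ f₂ ϑ hϑ hf₁_strong hf₂_conv gr hgrad β hβ hlip xt hxt γ lam γlb γub llb hγlb hγ
    hγub hllb hlam x p hprox hiter
end

section
/- Let H be a real Hilbert space, g₁, g₂ ∈ Γ₀(H) with Argmin(g₁+g₂) ≠ ∅, and suppose g₂ is strongly convex with modulus θ > 0. Let κ > 0, τ_m ∈ [τ̲, 2] with τ̲ > 0, and consider the exact Douglas–Rachford iteration z_{m+1/2} = prox_{κg₂} z_m, z_{m+1} = z_m + τ_m(prox_{κg₁}(2z_{m+1/2} − z_m) − z_{m+1/2}). Then (z_{m+1/2})_{m∈ℕ} converges strongly to the unique minimizer z̃ of g₁ + g₂. -/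
open Set Filter

local notation "⟪" x ", " y "⟫" => @inner ℝ _ _ x y


lemma sqnorm_convex {H : Type*} [NormedAddCommGroup H] [InnerProductSpace ℝ H]
    (c : ℝ) (hc : 0 ≤ c) : ConvexOn ℝ univ (fun y : H => c * ‖y‖^2) := by
  refine ⟨convex_univ, fun x _ y _ a b ha hb hab => ?_⟩
  have h1 : ‖a • x + b • y‖ ≤ a * ‖x‖ + b * ‖y‖ := by
    refine (norm_add_le _ _).trans ?_
    rw [norm_smul, norm_smul, Real.norm_eq_abs, Real.norm_eq_abs, abs_of_nonneg ha,
      abs_of_nonneg hb]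
  have h2 : ‖a • x + b • y‖^2 ≤ (a * ‖x‖ + b * ‖y‖)^2 :=
    pow_le_pow_left₀ (norm_nonneg _) h1 2
  have h3 : (a * ‖x‖ + b * ‖y‖)^2 ≤ a * ‖x‖^2 + b * ‖y‖^2 := by
    nlinarith [sq_nonneg (‖x‖ - ‖y‖), mul_nonneg ha hb, norm_nonneg x, norm_nonneg y]
  have := h2.trans h3
  simp only [smul_eq_mul]
  nlinarith [this]

lemma vi_lemma {H : Type*} [NormedAddCommGroup H] [InnerProductSpace ℝ H]
    (ψ : H → ℝ) (hψ : ConvexOn ℝ univ ψ) (α : ℝ) (hα : 0 < α) (c x : H)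
    (hx : IsMinOn (fun y => α/2 * ‖y - c‖^2 + ψ y) univ x) :
    ∀ y, α * ⟪c - x, y - x⟫ ≤ ψ y - ψ x := by
  intro y
  have key : ∀ t : ℝ, 0 < t → t ≤ 1 →
      0 ≤ α * ⟪x - c, y - x⟫ + α * t/2 * ‖y - x‖^2 + (ψ y - ψ x) := by
    intro t ht ht1
    have hyt : x + t • (y - x) = (1-t) • x + t • y := by module
    have hmin := isMinOn_iff.mp hx (x + t • (y - x)) (mem_univ _)
    have hconv : ψ (x + t • (y - x)) ≤ (1-t) * ψ x + t * ψ y := by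
      rw [hyt]
      simpa [smul_eq_mul] using hψ.2 (mem_univ x) (mem_univ y) (by linarith) ht.le (by ring)
    have hnorm : ‖(x + t • (y - x)) - c‖^2
        = ‖x - c‖^2 + 2 * (t * ⟪x - c, y - x⟫) + t^2 * ‖y - x‖^2 := by
      have : (x + t • (y - x)) - c = (x - c) + t • (y - x) := by abel
      rw [this, norm_add_sq_real, real_inner_smul_right, norm_smul, Real.norm_eq_abs,
        mul_pow, sq_abs]
    rw [hnorm] at hmin
    nlinarith [hmin, hconv]
  have hlim : Tendsto (fun t : ℝ => α * ⟪x - c, y - x⟫ + α * t/2 * ‖y - x‖^2 + (ψ y - ψ x))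
      (nhdsWithin 0 (Ioi 0)) (nhds (α * ⟪x - c, y - x⟫ + α * 0/2 * ‖y - x‖^2 + (ψ y - ψ x))) := by
    apply Tendsto.mono_left _ nhdsWithin_le_nhds
    have hcont : Continuous (fun t : ℝ =>
        α * ⟪x - c, y - x⟫ + α * t/2 * ‖y - x‖^2 + (ψ y - ψ x)) := by fun_prop
    exact hcont.tendsto 0
  have h0 : 0 ≤ α * ⟪x - c, y - x⟫ + α * 0/2 * ‖y - x‖^2 + (ψ y - ψ x) := by
    refine ge_of_tendsto hlim ?_
    filter_upwards [Ioc_mem_nhdsGT_of_mem (⟨le_refl (0:ℝ), zero_lt_one⟩ : (0:ℝ) ∈ Ico (0:ℝ) 1)]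
      with t ht
    exact key t ht.1 ht.2
  have hswap : ⟪c - x, y - x⟫ = -⟪x - c, y - x⟫ := by
    rw [← neg_sub x c, inner_neg_left]
  rw [hswap]
  nlinarith [h0]


lemma subgrad_shift {H : Type*} [NormedAddCommGroup H] [InnerProductSpace ℝ H]
    (h : H → ℝ) (hconv : ConvexOn ℝ univ h) (θ : ℝ) (zt u : H)
    (H₂ : ∀ y, ⟪u, y - zt⟫ ≤ (h y + θ/2 * ‖y‖^2) - (h zt + θ/2 * ‖zt‖^2)) :
    ∀ y, ⟪u - θ • zt, y - zt⟫ ≤ h y - h zt := by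
  intro y
  have key : ∀ t : ℝ, 0 < t → t ≤ 1 →
      ⟪u, y - zt⟫ - θ * ⟪zt, y - zt⟫ - θ*t/2 * ‖y - zt‖^2 ≤ h y - h zt := by
    intro t ht ht1
    have hyt : zt + t • (y - zt) = (1-t) • zt + t • y := by module
    have hconv' : h (zt + t • (y - zt)) ≤ (1-t) * h zt + t * h y := by
      rw [hyt]
      simpa [smul_eq_mul] using
        hconv.2 (mem_univ zt) (mem_univ y) (by linarith) ht.le (by ring)
    have hH := H₂ (zt + t • (y - zt))
    have hinner : ⟪u, (zt + t • (y - zt)) - zt⟫ = t * ⟪u, y - zt⟫ := by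
      rw [add_sub_cancel_left, real_inner_smul_right]
    have hnorm : ‖zt + t • (y - zt)‖^2
        = ‖zt‖^2 + 2 * (t * ⟪zt, y - zt⟫) + t^2 * ‖y - zt‖^2 := by
      rw [norm_add_sq_real, real_inner_smul_right, norm_smul, Real.norm_eq_abs, mul_pow, sq_abs]
    rw [hinner, hnorm] at hH
    nlinarith [hH, hconv']
  have hlim : Tendsto (fun t : ℝ => ⟪u, y - zt⟫ - θ * ⟪zt, y - zt⟫ - θ*t/2 * ‖y - zt‖^2)
      (nhdsWithin 0 (Ioi 0)) (nhds (⟪u, y - zt⟫ - θ * ⟪zt, y - zt⟫ - θ*0/2 * ‖y - zt‖^2)) := by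
    apply Tendsto.mono_left _ nhdsWithin_le_nhds
    have hcont : Continuous (fun t : ℝ =>
        ⟪u, y - zt⟫ - θ * ⟪zt, y - zt⟫ - θ*t/2 * ‖y - zt‖^2) := by fun_prop
    exact hcont.tendsto 0
  have h0 : ⟪u, y - zt⟫ - θ * ⟪zt, y - zt⟫ - θ*0/2 * ‖y - zt‖^2 ≤ h y - h zt := by
    refine le_of_tendsto hlim ?_
    filter_upwards [Ioc_mem_nhdsGT_of_mem (⟨le_refl (0:ℝ), zero_lt_one⟩ : (0:ℝ) ∈ Ico (0:ℝ) 1)]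
      with t ht
    exact key t ht.1 ht.2
  have : ⟪u - θ • zt, y - zt⟫ = ⟪u, y - zt⟫ - θ * ⟪zt, y - zt⟫ := by
    rw [inner_sub_left, real_inner_smul_left]
  rw [this]
  nlinarith [h0]


lemma cont_of_lsc {H : Type*} [NormedAddCommGroup H] [InnerProductSpace ℝ H] [CompleteSpace H]
    (g : H → ℝ) (hconv : ConvexOn ℝ univ g) (hlsc : LowerSemicontinuous g) :
    Continuous g := by
  have hclosed : ∀ n : ℕ, IsClosed {x : H | g x ≤ (n:ℝ)} :=
    fun n => lowerSemicontinuous_iff_isClosed_preimage.mp hlsc n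
  have hcover : (⋃ n : ℕ, {x : H | g x ≤ (n:ℝ)}) = univ := by
    refine eq_univ_of_forall fun x => ?_
    obtain ⟨n, hn⟩ := exists_nat_ge (g x)
    exact mem_iUnion.2 ⟨n, hn⟩
  obtain ⟨n, x₀, hx₀⟩ := nonempty_interior_of_iUnion_of_closed hclosed hcover
  have hb : ∃ x₀ ∈ (univ : Set H), (nhds x₀).IsBoundedUnder (· ≤ ·) g := by
    refine ⟨x₀, trivial, (n:ℝ), ?_⟩
    rw [Filter.eventually_map]
    exact Filter.mem_of_superset (mem_interior_iff_mem_nhds.1 hx₀) (fun x hx => hx)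
  have := ((hconv.continuousOn_tfae isOpen_univ ⟨0, trivial⟩).out 3 1).mp hb
  exact continuousOn_univ.mp this

lemma exists_subgrad {H : Type*} [NormedAddCommGroup H] [InnerProductSpace ℝ H] [CompleteSpace H]
    (g₁ g₂ : H → ℝ) (h1c : Continuous g₁) (hc1 : ConvexOn ℝ univ g₁) (hc2 : ConvexOn ℝ univ g₂)
    (zt : H) (hzt : IsMinOn (fun y => g₁ y + g₂ y) univ zt) :
    ∃ u : H, (∀ y, ⟪u, y - zt⟫ ≤ g₂ y - g₂ zt) ∧ (∀ y, ⟪-u, y - zt⟫ ≤ g₁ y - g₁ zt) := by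
  set s : Set (H × ℝ) := {p | g₁ p.1 - g₁ zt < p.2} with hs_def
  set t : Set (H × ℝ) := {p | p.2 ≤ g₂ zt - g₂ p.1} with ht_def
  have hs_open : IsOpen s :=
    isOpen_lt (by fun_prop) continuous_snd
  have hs_conv : Convex ℝ s := by
    intro p hp q hq a b ha hb hab
    simp only [hs_def, mem_setOf_eq] at hp hq ⊢
    have h1 : g₁ (a • p.1 + b • q.1) ≤ a * g₁ p.1 + b * g₁ q.1 := by
      simpa [smul_eq_mul] using hc1.2 (mem_univ p.1) (mem_univ q.1) ha hb hab
    have hfst : (a • p + b • q).1 = a • p.1 + b • q.1 := rfl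
    have hsnd : (a • p + b • q).2 = a * p.2 + b * q.2 := rfl
    rw [hfst, hsnd]
    have e3 : a * g₁ zt + b * g₁ zt = g₁ zt := by rw [← add_mul, hab, one_mul]
    rcases lt_or_ge 0 a with hap | hap
    · have e1 := mul_lt_mul_of_pos_left hp hap
      have e2 := mul_le_mul_of_nonneg_left hq.le hb
      nlinarith [h1, e1, e2, e3]
    · have ha0 : a = 0 := le_antisymm hap ha
      have hb1 : b = 1 := by linarith
      simp only [ha0, hb1, zero_smul, one_smul, zero_add, zero_mul, one_mul] at *
      linarith [hq]
  have ht_conv : Convex ℝ t := by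
    intro p hp q hq a b ha hb hab
    simp only [ht_def, mem_setOf_eq] at hp hq ⊢
    have h2 : g₂ (a • p.1 + b • q.1) ≤ a * g₂ p.1 + b * g₂ q.1 := by
      simpa [smul_eq_mul] using hc2.2 (mem_univ p.1) (mem_univ q.1) ha hb hab
    have hfst : (a • p + b • q).1 = a • p.1 + b • q.1 := rfl
    have hsnd : (a • p + b • q).2 = a * p.2 + b * q.2 := rfl
    rw [hfst, hsnd]
    have e3 : a * g₂ zt + b * g₂ zt = g₂ zt := by rw [← add_mul, hab, one_mul]
    have e1 := mul_le_mul_of_nonneg_left hp ha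
    have e2 := mul_le_mul_of_nonneg_left hq hb
    nlinarith [h2, e1, e2, e3]
  have hdisj : Disjoint s t := by
    rw [Set.disjoint_left]
    intro p hps hpt
    simp only [hs_def, ht_def, mem_setOf_eq] at hps hpt
    have := isMinOn_iff.mp hzt p.1 (mem_univ _)
    linarith
  obtain ⟨f, v, hfs, hft⟩ := geometric_hahn_banach_open hs_conv hs_open ht_conv hdisj
  set c : ℝ := f (0, 1) with hc_def
  have hdecomp : ∀ (x : H) (r : ℝ), f (x, r) = f (x, 0) + r * c := by
    intro x r
    have : ((x, r) : H × ℝ) = (x, 0) + r • ((0:H), (1:ℝ)) := by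
      simp [Prod.ext_iff]
    rw [this, map_add, map_smul, smul_eq_mul]
  have hmemt : ∀ y : H, ((y, g₂ zt - g₂ y) : H × ℝ) ∈ t := fun y => by simp only [ht_def, mem_setOf_eq]; exact le_refl _
  have hmems : ∀ (y : H) (r : ℝ), g₁ y - g₁ zt < r → ((y, r) : H × ℝ) ∈ s := fun y r hr => hr
  have hcne0 : ∀ h : c < 0, c ≠ 0 := fun h => ne_of_lt h
  have hcneg : c < 0 := by
    have h1 : f (zt, 1) < v := hfs _ (hmems zt 1 (by simp))
    have h2 : v ≤ f (zt, 0) := hft _ (by simpa using hmemt zt)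
    rw [hdecomp] at h1
    linarith
  have hlim : ∀ y : H, f (y, 0) + (g₁ y - g₁ zt) * c ≤ v := by
    intro y
    apply le_of_forall_pos_le_add
    intro ε hε
    have hδ : 0 < ε / (-c) := div_pos hε (by linarith)
    have := hfs _ (hmems y (g₁ y - g₁ zt + ε / (-c)) (by linarith))
    rw [hdecomp] at this
    have hcc : (ε / (-c)) * c = -ε := by
      rw [div_mul_eq_mul_div, div_neg, mul_div_assoc, div_self (ne_of_lt hcneg), mul_one]
    nlinarith [this]
  have hv : v = f (zt, 0) := by
    have h2 : v ≤ f (zt, 0) := hft _ (by simpa using hmemt zt)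
    have h3 := hlim zt
    simp only [sub_self, zero_mul, add_zero] at h3
    linarith
  have htineq : ∀ y : H, f (zt, 0) ≤ f (y, 0) + (g₂ zt - g₂ y) * c := by
    intro y
    rw [← hv]
    have := hft _ (hmemt y)
    rwa [hdecomp] at this
  set L : H →L[ℝ] ℝ := f.comp (ContinuousLinearMap.inl ℝ H ℝ) with hL_def
  have hLapp : ∀ x : H, L x = f (x, 0) := fun x => rfl
  set u : H := c⁻¹ • ((InnerProductSpace.toDual ℝ H).symm L) with hu_def
  have hu : ∀ x : H, ⟪u, x⟫ = c⁻¹ * f (x, 0) := by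
    intro x
    rw [hu_def, real_inner_smul_left, InnerProductSpace.toDual_symm_apply, hLapp]
  have hsub : ∀ y : H, f (y, 0) - f (zt, 0) = f (y - zt, 0) := by
    intro y
    rw [← map_sub]
    congr 1
    simp [Prod.ext_iff]
  have hcne : c ≠ 0 := ne_of_lt hcneg
  refine ⟨u, fun y => ?_, fun y => ?_⟩
  · have h := htineq y
    rw [hu, ← hsub]
    rw [inv_mul_eq_div, div_le_iff_of_neg hcneg]
    nlinarith [h]
  · have h := hlim y
    rw [hv] at h
    rw [inner_neg_left, hu, ← hsub, inv_mul_eq_div, neg_le, le_div_iff_of_neg hcneg]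
    nlinarith [h]


set_option maxHeartbeats 1000000 in
/-- Strong convergence of the exact Douglas–Rachford algorithm when `g₂` is
strongly convex: `(z_{m+1/2})` converges strongly to the unique minimizer of
`g₁ + g₂`. -/
theorem stmt_11 {H : Type*} [NormedAddCommGroup H] [InnerProductSpace ℝ H]
    [CompleteSpace H]
    (g₁ g₂ : H → ℝ)
    (hg₁_conv : ConvexOn ℝ univ g₁) (hg₁_lsc : LowerSemicontinuous g₁)
    (hg₂_lsc : LowerSemicontinuous g₂)
    (θ : ℝ) (hθ : 0 < θ)
    (hg₂_strong : ConvexOn ℝ univ (fun y => g₂ y - θ/2 * ‖y‖^2))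
    (zt : H) (hzt : IsMinOn (fun y => g₁ y + g₂ y) univ zt)
    (κ : ℝ) (hκ : 0 < κ)
    (τ : ℕ → ℝ) (τlb : ℝ) (hτlb : 0 < τlb) (hτ : ∀ m, τlb ≤ τ m ∧ τ m ≤ 2)
    (z zh p : ℕ → H)
    (hzh : ∀ m, IsMinOn (fun y => (1/2) * ‖y - z m‖^2 + κ * g₂ y) univ (zh m))
    (hp : ∀ m, IsMinOn
      (fun y => (1/2) * ‖y - ((2:ℝ) • zh m - z m)‖^2 + κ * g₁ y) univ (p m))
    (hiter : ∀ m, z (m+1) = z m + τ m • (p m - zh m)) :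
    (∀ w, IsMinOn (fun y => g₁ y + g₂ y) univ w → w = zt) ∧
    Tendsto zh atTop (nhds zt) := by
  have huniq : ∀ w, IsMinOn (fun y => g₁ y + g₂ y) univ w → w = zt := by
    intro w hw
    have h1 : g₁ zt + g₂ zt ≤ g₁ w + g₂ w := by
      simpa using isMinOn_iff.mp hzt w (mem_univ _)
    have h2 : g₁ w + g₂ w ≤ g₁ zt + g₂ zt := by
      simpa using isMinOn_iff.mp hw zt (mem_univ _)
    have h3 : g₁ zt + g₂ zt ≤ g₁ ((1/2:ℝ) • w + (1/2:ℝ) • zt) + g₂ ((1/2:ℝ) • w + (1/2:ℝ) • zt) := by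
      simpa using isMinOn_iff.mp hzt ((1/2:ℝ) • w + (1/2:ℝ) • zt) (mem_univ _)
    have hcg1 : g₁ ((1/2:ℝ) • w + (1/2:ℝ) • zt) ≤ 1/2 * g₁ w + 1/2 * g₁ zt := by
      simpa [smul_eq_mul] using
        hg₁_conv.2 (mem_univ w) (mem_univ zt) (by norm_num) (by norm_num) (by norm_num)
    have hch : g₂ ((1/2:ℝ) • w + (1/2:ℝ) • zt) - θ/2*‖(1/2:ℝ) • w + (1/2:ℝ) • zt‖^2
        ≤ 1/2 * (g₂ w - θ/2*‖w‖^2) + 1/2 * (g₂ zt - θ/2*‖zt‖^2) := by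
      simpa [smul_eq_mul] using
        hg₂_strong.2 (mem_univ w) (mem_univ zt) (by norm_num) (by norm_num) (by norm_num)
    have hmid2 : ‖(1/2:ℝ) • w + (1/2:ℝ) • zt‖^2 = 1/4 * (‖w‖^2 + 2*⟪w, zt⟫ + ‖zt‖^2) := by
      have e : (1/2:ℝ) • w + (1/2:ℝ) • zt = (1/2:ℝ) • (w + zt) := by module
      rw [e, norm_smul, Real.norm_eq_abs, mul_pow, sq_abs, norm_add_sq_real]
      ring
    have hwz : ‖w - zt‖^2 = ‖w‖^2 - 2*⟪w, zt⟫ + ‖zt‖^2 := norm_sub_sq_real w zt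
    have hq : θ * ‖w - zt‖^2 ≤ 0 := by nlinarith [h3, hcg1, hch, h1, h2, hmid2, hwz]
    have hle : ‖w - zt‖^2 ≤ 0 := by nlinarith [hq, hθ, sq_nonneg ‖w - zt‖]
    have h0 : ‖w - zt‖ = 0 := by
      have := le_antisymm hle (sq_nonneg _)
      exact pow_eq_zero_iff (by norm_num) |>.mp this
    exact sub_eq_zero.mp (norm_eq_zero.mp h0)
  refine ⟨huniq, ?_⟩
  have hσpos : (0:ℝ) < 1 + κ*θ := by positivity
  have hg₂_conv : ConvexOn ℝ univ g₂ := by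
    have h := hg₂_strong.add (sqnorm_convex (θ/2) (by positivity))
    have e : ((fun y : H => g₂ y - θ/2 * ‖y‖^2) + fun y : H => θ/2 * ‖y‖^2) = g₂ := by
      funext y; simp
    rwa [e] at h
  have hcont : Continuous g₁ := cont_of_lsc g₁ hg₁_conv hg₁_lsc
  obtain ⟨u, hu₂, hu₁⟩ := exists_subgrad g₁ g₂ hcont hg₁_conv hg₂_conv zt hzt
  set zs : H := zt + κ • u with hzs
  -- convexity of scaled functions
  have hψ₂conv : ConvexOn ℝ univ (fun y : H => κ * (g₂ y - θ/2 * ‖y‖^2)) := by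
    have h := hg₂_strong.smul hκ.le
    have e : (fun y : H => κ • ((fun y : H => g₂ y - θ/2 * ‖y‖^2) y))
        = fun y : H => κ * (g₂ y - θ/2 * ‖y‖^2) := by
      funext y; simp [smul_eq_mul]
    rwa [e] at h
  have hψ₁conv : ConvexOn ℝ univ (fun y : H => κ * g₁ y) := by
    have h := hg₁_conv.smul hκ.le
    have e : (fun y : H => κ • g₁ y) = fun y : H => κ * g₁ y := by
      funext y; simp [smul_eq_mul]
    rwa [e] at h
  -- transferred minimization for g₂-prox
  have htrans : ∀ m, IsMinOn
      (fun y => (1+κ*θ)/2 * ‖y - ((1+κ*θ)⁻¹ • z m)‖^2 + κ * (g₂ y - θ/2 * ‖y‖^2))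
      univ (zh m) := by
    intro m
    have hkeyc : ∀ w : H, (1+κ*θ)/2 * ‖w - ((1+κ*θ)⁻¹ • z m)‖^2 + κ * (g₂ w - θ/2 * ‖w‖^2)
        = ((1/2) * ‖w - z m‖^2 + κ * g₂ w) + (((1+κ*θ)⁻¹ - 1) * ‖z m‖^2 / 2) := by
      intro w
      rw [norm_sub_sq_real, norm_sub_sq_real, real_inner_smul_right, norm_smul,
        Real.norm_eq_abs, abs_of_pos (inv_pos.2 hσpos)]
      field_simp
      ring
    apply isMinOn_iff.mpr
    intro y _
    have hm := isMinOn_iff.mp (hzh m) y (mem_univ _)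
    rw [hkeyc, hkeyc]
    linarith [hm]
  -- variational inequalities
  have VI₂ : ∀ m y, ⟪z m - (1+κ*θ) • zh m, y - zh m⟫
      ≤ κ * (g₂ y - θ/2 * ‖y‖^2) - κ * (g₂ (zh m) - θ/2 * ‖zh m‖^2) := by
    intro m y
    have h := vi_lemma (fun y => κ * (g₂ y - θ/2 * ‖y‖^2)) hψ₂conv (1+κ*θ) hσpos
      ((1+κ*θ)⁻¹ • z m) (zh m) (htrans m) y
    have heq : (1+κ*θ) * ⟪(1+κ*θ)⁻¹ • z m - zh m, y - zh m⟫
        = ⟪z m - (1+κ*θ) • zh m, y - zh m⟫ := by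
      rw [inner_sub_left, inner_sub_left, real_inner_smul_left, real_inner_smul_left]
      field_simp
    rw [heq] at h
    simpa using h
  have VI₁ : ∀ m y, ⟪((2:ℝ) • zh m - z m) - p m, y - p m⟫
      ≤ κ * g₁ y - κ * g₁ (p m) := by
    intro m y
    have h := vi_lemma (fun y => κ * g₁ y) hψ₁conv 1 one_pos
      ((2:ℝ) • zh m - z m) (p m) (by
        have := hp m
        simpa using this) y
    simpa using h
  have hv := subgrad_shift (fun y => g₂ y - θ/2 * ‖y‖^2) hg₂_strong θ zt u (by
    intro y
    have h2 := hu₂ y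
    linarith [h2])
  have VI₂s : ∀ y, ⟪zs - (1+κ*θ) • zt, y - zt⟫
      ≤ κ * (g₂ y - θ/2 * ‖y‖^2) - κ * (g₂ zt - θ/2 * ‖zt‖^2) := by
    intro y
    have h1 := hv y
    have hexp : zs - (1+κ*θ) • zt = κ • (u - θ • zt) := by rw [hzs]; module
    rw [hexp, real_inner_smul_left]
    nlinarith [mul_le_mul_of_nonneg_left h1 hκ.le]
  have VI₁s : ∀ y, ⟪zt - zs, y - zt⟫ ≤ κ * g₁ y - κ * g₁ zt := by
    intro y
    have h1 := hu₁ y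
    have hexp : zt - zs = κ • (-u) := by rw [hzs]; module
    rw [hexp, real_inner_smul_left]
    nlinarith [mul_le_mul_of_nonneg_left h1 hκ.le]
  -- key inequality
  have hkey : ∀ m, ⟪z m - zs, p m - zh m⟫
      ≤ -‖p m - zh m‖^2 - κ*θ*‖zh m - zt‖^2 := by
    intro m
    -- S2
    have hsum2 : ⟪(z m - zs) - (1+κ*θ) • (zh m - zt), zt - zh m⟫ ≤ 0 := by
      have e : (z m - zs) - (1+κ*θ) • (zh m - zt)
          = (z m - (1+κ*θ) • zh m) - (zs - (1+κ*θ) • zt) := by module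
      rw [e, inner_sub_left]
      have e2 : ⟪zs - (1+κ*θ) • zt, zt - zh m⟫ = -⟪zs - (1+κ*θ) • zt, zh m - zt⟫ := by
        rw [← inner_neg_right]; congr 1; module
      rw [e2]
      linarith [VI₂ m zt, VI₂s (zh m)]
    have hS2 : (1+κ*θ) * ‖zh m - zt‖^2 ≤ ⟪zh m - zt, z m - zs⟫ := by
      have e : ⟪(z m - zs) - (1+κ*θ) • (zh m - zt), zt - zh m⟫
          = (1+κ*θ) * ‖zh m - zt‖^2 - ⟪zh m - zt, z m - zs⟫ := by
        rw [inner_sub_left, real_inner_smul_left]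
        rw [show zt - zh m = -(zh m - zt) from (neg_sub _ _).symm]
        rw [inner_neg_right, inner_neg_right, real_inner_self_eq_norm_sq,
          real_inner_comm (z m - zs)]
        ring
      linarith [hsum2, e.symm.le, e.le]
    -- S1
    have hsum1 : ⟪((zh m - zt) - (p m - zh m)) - (z m - zs), -((zh m - zt) + (p m - zh m))⟫ ≤ 0 := by
      have e : ((zh m - zt) - (p m - zh m)) - (z m - zs)
          = (((2:ℝ) • zh m - z m) - p m) - (zt - zs) := by module
      have e2 : -((zh m - zt) + (p m - zh m)) = zt - p m := by module
      rw [e, e2, inner_sub_left]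
      have e3 : ⟪zt - zs, zt - p m⟫ = -⟪zt - zs, p m - zt⟫ := by
        rw [← inner_neg_right]; congr 1; module
      rw [e3]
      linarith [VI₁ m zt, VI₁s (p m)]
    have hS1 : ⟪z m - zs, (zh m - zt) + (p m - zh m)⟫ ≤ ‖zh m - zt‖^2 - ‖p m - zh m‖^2 := by
      have e : ⟪((zh m - zt) - (p m - zh m)) - (z m - zs), -((zh m - zt) + (p m - zh m))⟫
          = -(‖zh m - zt‖^2 - ‖p m - zh m‖^2) + ⟪z m - zs, (zh m - zt) + (p m - zh m)⟫ := by
        rw [inner_neg_right, inner_sub_left, inner_sub_left, inner_add_right, inner_add_right,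
          inner_add_right, real_inner_self_eq_norm_sq, real_inner_self_eq_norm_sq,
          real_inner_comm (p m - zh m) (zh m - zt)]
        ring
      linarith [hsum1, e.le, e.symm.le]
    have e4 : ⟪z m - zs, (zh m - zt) + (p m - zh m)⟫
        = ⟪z m - zs, zh m - zt⟫ + ⟪z m - zs, p m - zh m⟫ := inner_add_right _ _ _
    have e5 : ⟪zh m - zt, z m - zs⟫ = ⟪z m - zs, zh m - zt⟫ := real_inner_comm _ _
    nlinarith [hS1, hS2, e4.le, e4.symm.le, e5.le, e5.symm.le]
  -- Fejér monotonicity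
  have hfej : ∀ m, ‖z (m+1) - zs‖^2 ≤ ‖z m - zs‖^2 - 2*τlb*(κ*θ)*‖zh m - zt‖^2 := by
    intro m
    have he : z (m+1) - zs = (z m - zs) + τ m • (p m - zh m) := by rw [hiter m]; module
    rw [he, norm_add_sq_real, real_inner_smul_right, norm_smul, Real.norm_eq_abs, mul_pow,
      sq_abs]
    obtain ⟨hτ1, hτ2⟩ := hτ m
    have hτpos : 0 < τ m := lt_of_lt_of_le hτlb hτ1
    nlinarith [mul_le_mul_of_nonneg_left (hkey m) hτpos.le,
      mul_nonneg (mul_nonneg hτpos.le (by linarith : (0:ℝ) ≤ 2 - τ m)) (sq_nonneg ‖p m - zh m‖),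
      mul_nonneg (sub_nonneg.2 hτ1)
        (mul_nonneg (mul_nonneg hκ.le hθ.le) (sq_nonneg ‖zh m - zt‖))]
  -- convergence
  have hbanti : Antitone (fun m => ‖z m - zs‖^2) := by
    apply antitone_nat_of_succ_le
    intro m
    have hpos : 0 ≤ 2*τlb*(κ*θ)*‖zh m - zt‖^2 := by positivity
    linarith [hfej m]
  have hbdd : BddBelow (Set.range (fun m => ‖z m - zs‖^2)) := by
    refine ⟨0, fun x hx => ?_⟩
    obtain ⟨m, rfl⟩ := hx
    exact sq_nonneg _
  have hbtend := tendsto_atTop_ciInf hbanti hbdd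
  have hbtend' : Tendsto (fun m => ‖z (m+1) - zs‖^2) atTop (nhds (⨅ m, ‖z m - zs‖^2)) :=
    hbtend.comp (tendsto_add_atTop_nat 1)
  have hdiff : Tendsto (fun m => ‖z m - zs‖^2 - ‖z (m+1) - zs‖^2) atTop (nhds 0) := by
    have := hbtend.sub hbtend'
    simpa using this
  have hsq0 : Tendsto (fun m => 2*τlb*(κ*θ)*‖zh m - zt‖^2) atTop (nhds 0) :=
    squeeze_zero (fun m => by positivity) (fun m => by linarith [hfej m]) hdiff
  have hC : (0:ℝ) < 2*τlb*(κ*θ) := by positivity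
  have hsq1 : Tendsto (fun m => ‖zh m - zt‖^2) atTop (nhds 0) := by
    have h := hsq0.const_mul ((2*τlb*(κ*θ))⁻¹)
    have e : (fun m => (2*τlb*(κ*θ))⁻¹ * (2*τlb*(κ*θ)*‖zh m - zt‖^2))
        = fun m => ‖zh m - zt‖^2 := by
      funext m
      rw [← mul_assoc, inv_mul_cancel₀ (ne_of_gt hC), one_mul]
    rw [e] at h
    simpa using h
  have hnorm0 : Tendsto (fun m => ‖zh m - zt‖) atTop (nhds 0) := by
    have hs := (Real.continuous_sqrt.tendsto 0).comp hsq1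
    have e : (fun m => Real.sqrt (‖zh m - zt‖^2)) = fun m => ‖zh m - zt‖ := by
      funext m; rw [Real.sqrt_sq (norm_nonneg _)]
    have hs2 : Tendsto (fun m => Real.sqrt (‖zh m - zt‖ ^ 2)) atTop (nhds (Real.sqrt 0)) := hs
    rw [e] at hs2
    simpa [Real.sqrt_zero] using hs2
  exact tendsto_iff_norm_sub_tendsto_zero.mpr hnorm0
end

section
/- Let H be a real Hilbert space, g₁, g₂ ∈ Γ₀(H) with g₂ strongly convex with modulus θ, κ > 0, and let S_τ = τ·prox_{κg₁}∘rprox_{κg₂} + Id − τ·prox_{κg₂} be the relaxed Douglas–Rachford operator with τ ∈ (0,2]. Then for all y, y' ∈ H: ‖S_τ y − S_τ y'‖² + κθτ²‖prox_{κg₂}y − prox_{κg₂}y'‖² ≤ (2−τ)⟨S_τ y − S_τ y', y−y'⟩ + (τ−1)‖y−y'‖². -/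
open Set
open scoped RealInnerProductSpace

lemma prox_var {H : Type*} [NormedAddCommGroup H] [InnerProductSpace ℝ H]
    (g : H → ℝ) (hg : ConvexOn ℝ univ g) (κ c : ℝ) (hκ : 0 < κ) (hc : 0 ≤ c)
    (y a w : H)
    (hmin : IsMinOn (fun z => (1/2) * ‖z - y‖^2 + c/2 * ‖z‖^2 + κ * g z) univ a) :
    0 ≤ ⟪a - y, w - a⟫ + c * ⟪a, w - a⟫ + κ * (g w - g a) := by
  set A := ⟪a - y, w - a⟫ + c * ⟪a, w - a⟫ + κ * (g w - g a) with hA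
  set B := (1 + c)/2 * ‖w - a‖^2 with hB
  have hB0 : 0 ≤ B := by positivity
  have key : ∀ t : ℝ, 0 < t → t ≤ 1 → 0 ≤ A + t * B := by
    intro t ht0 ht1
    have hpt : a + t • (w - a) = (1 - t) • a + t • w := by module
    have hmin' : (1/2) * ‖a - y‖^2 + c/2 * ‖a‖^2 + κ * g a ≤
        (1/2) * ‖a + t • (w - a) - y‖^2 + c/2 * ‖a + t • (w - a)‖^2
          + κ * g (a + t • (w - a)) := hmin (mem_univ _)
    have hconv : g (a + t • (w - a)) ≤ (1 - t) * g a + t * g w := by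
      rw [hpt]
      exact hg.2 (mem_univ a) (mem_univ w) (by linarith) ht0.le (by ring)
    have hconv' : κ * g (a + t • (w - a)) ≤ κ * ((1 - t) * g a + t * g w) :=
      mul_le_mul_of_nonneg_left hconv hκ.le
    have e1 : ‖a + t • (w - a) - y‖^2
        = ‖a - y‖^2 + 2*t*⟪a - y, w - a⟫ + t^2 * ‖w - a‖^2 := by
      have h : a + t • (w - a) - y = (a - y) + t • (w - a) := by abel
      rw [h, norm_add_sq_real, real_inner_smul_right, norm_smul]
      simp [Real.norm_eq_abs, mul_pow, sq_abs]
      ring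
    have e2 : ‖a + t • (w - a)‖^2 = ‖a‖^2 + 2*t*⟪a, w - a⟫ + t^2 * ‖w - a‖^2 := by
      rw [norm_add_sq_real, real_inner_smul_right, norm_smul]
      simp [Real.norm_eq_abs, mul_pow, sq_abs]
      ring
    rw [e1, e2] at hmin'
    have h0 : 0 ≤ t * (A + t * B) := by rw [hA, hB]; nlinarith [hmin', hconv']
    nlinarith [h0, ht0]
  by_contra hcon
  push_neg at hcon
  have ht0 : 0 < min 1 (-A/(2*(B+1))) := by
    apply lt_min one_pos
    apply div_pos (by linarith) (by linarith)
  have h := key _ ht0 (min_le_left _ _)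
  have ht1 : min 1 (-A/(2*(B+1))) ≤ -A/(2*(B+1)) := min_le_right _ _
  have hmul : min 1 (-A/(2*(B+1))) * B ≤ (-A/(2*(B+1))) * B :=
    mul_le_mul_of_nonneg_right ht1 hB0
  have hd : (-A/(2*(B+1))) * B ≤ -A/2 := by
    rw [div_mul_eq_mul_div, div_le_div_iff₀ (by linarith) two_pos]
    nlinarith
  linarith

/-- Key inequality for the relaxed Douglas–Rachford operator
`S_τ = τ prox_{κg₁} ∘ rprox_{κg₂} + Id − τ prox_{κg₂}` when `g₂` is strongly
convex with modulus `θ`. -/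
theorem stmt_12 {H : Type*} [NormedAddCommGroup H] [InnerProductSpace ℝ H]
    [CompleteSpace H]
    (g₁ g₂ : H → ℝ)
    (hg₁_conv : ConvexOn ℝ univ g₁) (hg₁_lsc : LowerSemicontinuous g₁)
    (hg₂_lsc : LowerSemicontinuous g₂)
    (θ : ℝ) (hθ : 0 < θ)
    (hg₂_strong : ConvexOn ℝ univ (fun y => g₂ y - θ/2 * ‖y‖^2))
    (κ : ℝ) (hκ : 0 < κ) (τ : ℝ) (hτ0 : 0 < τ) (hτ2 : τ ≤ 2)
    (y y' a a' b b' : H)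
    -- a = prox_{κg₂} y, a' = prox_{κg₂} y'
    (ha : IsMinOn (fun w => (1/2) * ‖w - y‖^2 + κ * g₂ w) univ a)
    (ha' : IsMinOn (fun w => (1/2) * ‖w - y'‖^2 + κ * g₂ w) univ a')
    -- b = prox_{κg₁} (rprox_{κg₂} y), b' = prox_{κg₁} (rprox_{κg₂} y')
    (hb : IsMinOn (fun w => (1/2) * ‖w - ((2:ℝ) • a - y)‖^2 + κ * g₁ w) univ b)
    (hb' : IsMinOn (fun w => (1/2) * ‖w - ((2:ℝ) • a' - y')‖^2 + κ * g₁ w) univ b') :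
    ‖(y + τ • (b - a)) - (y' + τ • (b' - a'))‖^2 + κ * θ * τ^2 * ‖a - a'‖^2 ≤
      (2 - τ) * ⟪(y + τ • (b - a)) - (y' + τ • (b' - a')), y - y'⟫
        + (τ - 1) * ‖y - y'‖^2 := by
  set gt := fun w : H => g₂ w - θ/2 * ‖w‖^2 with hgt
  have ha2 : IsMinOn (fun z => (1/2) * ‖z - y‖^2 + (κ*θ)/2 * ‖z‖^2 + κ * gt z) univ a := by
    have h : (fun z => (1/2) * ‖z - y‖^2 + (κ*θ)/2 * ‖z‖^2 + κ * gt z)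
        = (fun w => (1/2) * ‖w - y‖^2 + κ * g₂ w) := by
      funext z; simp only [hgt]; ring
    rw [h]; exact ha
  have ha2' : IsMinOn (fun z => (1/2) * ‖z - y'‖^2 + (κ*θ)/2 * ‖z‖^2 + κ * gt z) univ a' := by
    have h : (fun z => (1/2) * ‖z - y'‖^2 + (κ*θ)/2 * ‖z‖^2 + κ * gt z)
        = (fun w => (1/2) * ‖w - y'‖^2 + κ * g₂ w) := by
      funext z; simp only [hgt]; ring
    rw [h]; exact ha'
  have hb2 : IsMinOn (fun z => (1/2) * ‖z - ((2:ℝ) • a - y)‖^2 + (0:ℝ)/2 * ‖z‖^2 + κ * g₁ z) univ b := by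
    have h : (fun z => (1/2) * ‖z - ((2:ℝ) • a - y)‖^2 + (0:ℝ)/2 * ‖z‖^2 + κ * g₁ z)
        = (fun w => (1/2) * ‖w - ((2:ℝ) • a - y)‖^2 + κ * g₁ w) := by
      funext z; ring
    rw [h]; exact hb
  have hb2' : IsMinOn (fun z => (1/2) * ‖z - ((2:ℝ) • a' - y')‖^2 + (0:ℝ)/2 * ‖z‖^2 + κ * g₁ z) univ b' := by
    have h : (fun z => (1/2) * ‖z - ((2:ℝ) • a' - y')‖^2 + (0:ℝ)/2 * ‖z‖^2 + κ * g₁ z)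
        = (fun w => (1/2) * ‖w - ((2:ℝ) • a' - y')‖^2 + κ * g₁ w) := by
      funext z; ring
    rw [h]; exact hb'
  have P1a := prox_var gt hg₂_strong κ (κ*θ) hκ (by positivity) y a a' ha2
  have P1b := prox_var gt hg₂_strong κ (κ*θ) hκ (by positivity) y' a' a ha2'
  have P2a := prox_var g₁ hg₁_conv κ 0 hκ le_rfl ((2:ℝ) • a - y) b b' hb2
  have P2b := prox_var g₁ hg₁_conv κ 0 hκ le_rfl ((2:ℝ) • a' - y') b' b hb2'
  -- P1 : (1+κθ)‖a-a'‖² ≤ ⟪a-a', y-y'⟫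
  have P1 : (1 + κ*θ) * ‖a - a'‖^2 ≤ ⟪a - a', y - y'⟫ := by
    have e : ⟪a - y, a' - a⟫ + κ*θ * ⟪a, a' - a⟫ + (⟪a' - y', a - a'⟫ + κ*θ * ⟪a', a - a'⟫)
        = ⟪a - a', y - y'⟫ - (1 + κ*θ) * ‖a - a'‖^2 := by
      simp only [norm_sub_sq_real, inner_sub_left, inner_sub_right, real_inner_self_eq_norm_sq]
      rw [real_inner_comm a a', real_inner_comm a y, real_inner_comm a' y', real_inner_comm a y', real_inner_comm a' y]
      ring
    linarith [P1a, P1b, e]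
  -- P2 : ‖b-b'‖² ≤ 2⟪a-a', b-b'⟫ - ⟪y-y', b-b'⟫
  have P2 : ‖b - b'‖^2 ≤ 2 * ⟪a - a', b - b'⟫ - ⟪y - y', b - b'⟫ := by
    have e : ⟪b - ((2:ℝ) • a - y), b' - b⟫ + ⟪b' - ((2:ℝ) • a' - y'), b - b'⟫
        = 2 * ⟪a - a', b - b'⟫ - ⟪y - y', b - b'⟫ - ‖b - b'‖^2 := by
      simp only [norm_sub_sq_real, inner_sub_left, inner_sub_right, real_inner_smul_left, real_inner_self_eq_norm_sq]
      rw [real_inner_comm b' b]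
      ring
    nlinarith [P2a, P2b, e]
  have hS : (y + τ • (b - a)) - (y' + τ • (b' - a')) = (y - y') + τ • ((b - b') - (a - a')) := by
    module
  set u := y - y' with hu
  set α := a - a' with hα
  set β := b - b' with hβ
  rw [hS]
  have e1 : ‖u + τ • (β - α)‖^2
      = ‖u‖^2 + 2*τ*(⟪u, β⟫ - ⟪u, α⟫) + τ^2*(‖β‖^2 - 2*⟪α, β⟫ + ‖α‖^2) := by
    rw [norm_add_sq_real, real_inner_smul_right, inner_sub_right, norm_smul]
    simp only [Real.norm_eq_abs, mul_pow, sq_abs]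
    rw [norm_sub_sq_real β α, real_inner_comm β α]
    ring
  have e2 : ⟪u + τ • (β - α), u⟫ = ‖u‖^2 + τ*(⟪u, β⟫ - ⟪u, α⟫) := by
    rw [real_inner_comm, inner_add_right, real_inner_smul_right, real_inner_self_eq_norm_sq,
      inner_sub_right]
  rw [e1, e2]
  nlinarith [mul_le_mul_of_nonneg_left P1 (sq_nonneg τ), mul_le_mul_of_nonneg_left P2 (sq_nonneg τ),
    real_inner_comm u α, real_inner_comm u β]
end

section
/- Let H be a real Hilbert space, C a nonempty closed convex subset, g convex, differentiable with β-Lipschitz gradient, κ > 0, x ∈ H. Consider the iteration x_{n+1} = x_n + λ_n(P_C((x_n − γ_n(κ∇g(x_n) − x))/(1+γ_n)) − x_n), with 0 < γ̲ ≤ γ_n ≤ γ̄ < 2/(κβ) and 0 < λ̲ ≤ λ_n ≤ 1. Then ‖x_n − prox_{ι_C+κg}x‖ ≤ ρⁿ‖x₀ − prox_{ι_C+κg}x‖ where ρ = 1 − λ̲γ̲/(1+γ̲). -/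
/-!
Write `T_γ = P_C ∘ forwardStep gr κ γ x`, so that `x_{n+1} = x_n + λ_n (T_{γ_n} x_n - x_n)`.
The first-order optimality condition of `xstar = prox_{ι_C + κ g} x` says exactly that `xstar`
is a fixed point of every `T_γ`. By the Baillon–Haddad theorem `∇g` is `β⁻¹`-cocoercive, hence
the gradient step `y ↦ y - γκ ∇g y` is nonexpansive for `γκβ ≤ 2`; since `P_C` is nonexpansive
too and `forwardStep` rescales by `(1 + γ)⁻¹`, `T_γ` contracts distances to `xstar` by
`(1 + γ)⁻¹` (the strong convexity of `½‖· - x‖²`). Relaxing by `λ` gives the factor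
`1 - λγ/(1 + γ) ≤ ρ` per step.
-/

open Set
open scoped RealInnerProductSpace

section

variable {H : Type*} [NormedAddCommGroup H] [InnerProductSpace ℝ H]

theorem inner_sub_le_zero_of_isMinOn_norm_sub {K : Set H} (hK : Convex ℝ K) {u p : H}
    (hp : p ∈ K) (hmin : IsMinOn (fun c ↦ ‖c - u‖) K p) : ∀ c ∈ K, ⟪u - p, c - p⟫ ≤ 0 := by
  have : Nonempty K := ⟨⟨p, hp⟩⟩
  refine (norm_eq_iInf_iff_real_inner_le_zero hK hp).1 (le_antisymm ?_ ?_)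
  · exact le_ciInf fun c ↦ by simpa only [norm_sub_rev u] using isMinOn_iff.1 hmin c c.2
  · exact ciInf_le ⟨0, by rintro _ ⟨c, rfl⟩; positivity⟩ (⟨p, hp⟩ : K)

theorem norm_sub_le_norm_sub_of_inner_le_zero {K : Set H} {u₁ u₂ p₁ p₂ : H}
    (hp₁ : p₁ ∈ K) (hp₂ : p₂ ∈ K) (h₁ : ∀ c ∈ K, ⟪u₁ - p₁, c - p₁⟫ ≤ 0)
    (h₂ : ∀ c ∈ K, ⟪u₂ - p₂, c - p₂⟫ ≤ 0) : ‖p₁ - p₂‖ ≤ ‖u₁ - u₂‖ := by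
  have hsum : ‖p₁ - p₂‖ ^ 2 ≤ ⟪u₁ - u₂, p₁ - p₂⟫ := by
    have hexp : ⟪u₁ - p₁, p₂ - p₁⟫ + ⟪u₂ - p₂, p₁ - p₂⟫
        = ‖p₁ - p₂‖ ^ 2 - ⟪u₁ - u₂, p₁ - p₂⟫ := by
      rw [← neg_sub p₁ p₂, inner_neg_right, ← real_inner_self_eq_norm_sq]
      simp only [inner_sub_left]
      ring
    linarith [h₁ p₂ hp₂, h₂ p₁ hp₁]
  have hcs := real_inner_le_norm (u₁ - u₂) (p₁ - p₂)
  rcases (norm_nonneg (p₁ - p₂)).eq_or_lt with h | h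
  · rw [← h]; positivity
  · nlinarith

theorem norm_add_smul_sub_sub_le {y q z : H} {t : ℝ} (ht₀ : 0 ≤ t) (ht₁ : t ≤ 1) :
    ‖y + t • (q - y) - z‖ ≤ (1 - t) * ‖y - z‖ + t * ‖q - z‖ := by
  rw [show y + t • (q - y) - z = (1 - t) • (y - z) + t • (q - z) by module]
  refine (norm_add_le _ _).trans_eq ?_
  rw [norm_smul, norm_smul, Real.norm_of_nonneg (sub_nonneg.2 ht₁), Real.norm_of_nonneg ht₀]

/-- The point whose projection onto `C` is the forward–backward update of `y`:
`P_C (forwardStep gr κ γ x y) = prox_{γ f₁} (y - γ κ ∇g y)` with `f₁ = ½‖· - x‖² + ι_C`. -/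
noncomputable def forwardStep (gr : H → H) (κ γ : ℝ) (x y : H) : H :=
  (1 + γ)⁻¹ • (y - γ • (κ • gr y - x))

theorem forwardStep_sub_forwardStep {gr : H → H} {κ γ : ℝ} {x : H} (y z : H) :
    forwardStep gr κ γ x y - forwardStep gr κ γ x z
      = (1 + γ)⁻¹ • ((y - z) - (γ * κ) • (gr y - gr z)) := by
  simp only [forwardStep, ← smul_sub]
  congr 1
  module

variable [CompleteSpace H]

theorem HasGradientAt.hasDerivAt_lineMap {g : H → ℝ} {g' w y : H} {t : ℝ}
    (h : HasGradientAt g g' (AffineMap.lineMap (k := ℝ) w y t)) :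
    HasDerivAt (fun s ↦ g (AffineMap.lineMap w y s)) ⟪g', y - w⟫ t := by
  have := h.hasFDerivAt.comp_hasDerivAt t AffineMap.hasDerivAt_lineMap
  rwa [InnerProductSpace.toDual_apply_apply] at this

theorem ConvexOn.add_inner_le_of_hasGradientAt_s14 {s : Set H} {g : H → ℝ} {g' w y : H}
    (hg : ConvexOn ℝ s g) (hw : w ∈ s) (hy : y ∈ s) (h : HasGradientAt g g' w) :
    g w + ⟪g', y - w⟫ ≤ g y := by
  have hconv : ConvexOn ℝ (Icc 0 1) (fun t ↦ g (AffineMap.lineMap (k := ℝ) w y t)) :=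
    (hg.comp_affineMap (AffineMap.lineMap w y)).subset
      (by simpa only [← mapsTo_iff_subset_preimage, mapsTo_iff_image_subset,
        ← segment_eq_image_lineMap] using hg.1.segment_subset hw hy) (convex_Icc 0 1)
  have hslope := hconv.le_slope_of_hasDerivAt (by simp) (by simp) zero_lt_one
    (HasGradientAt.hasDerivAt_lineMap (by simpa using h))
  simp only [slope_def_field, AffineMap.lineMap_apply_zero, AffineMap.lineMap_apply_one,
    sub_zero, div_one] at hslope
  linarith

theorem le_add_inner_add_sq_of_lipschitzWith {g : H → ℝ} {gr : H → H} {β : NNReal}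
    (hgrad : ∀ w, HasGradientAt g (gr w) w) (hlip : LipschitzWith β gr) (w y : H) :
    g y ≤ g w + ⟪gr w, y - w⟫ + β / 2 * ‖y - w‖ ^ 2 := by
  set k : ℝ → ℝ := fun t ↦
    g (AffineMap.lineMap w y t) - t * ⟪gr w, y - w⟫ - β / 2 * t ^ 2 * ‖y - w‖ ^ 2
  have hk : ∀ t, HasDerivAt k
      (⟪gr (AffineMap.lineMap w y t) - gr w, y - w⟫ - β * t * ‖y - w‖ ^ 2) t := by
    intro t
    have := (((hgrad (AffineMap.lineMap w y t)).hasDerivAt_lineMap).sub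
      ((hasDerivAt_id t).mul_const ⟪gr w, y - w⟫)).sub
      (((hasDerivAt_pow 2 t).const_mul (β / 2 : ℝ)).mul_const (‖y - w‖ ^ 2))
    exact this.congr_deriv (by simp only [inner_sub_left]; ring)
  have hanti : AntitoneOn k (Ici 0) := by
    refine antitoneOn_of_hasDerivWithinAt_nonpos (convex_Ici 0)
      (fun t _ ↦ (hk t).continuousAt.continuousWithinAt)
      (fun t _ ↦ (hk t).hasDerivWithinAt) ?_
    intro t ht
    rw [interior_Ici, mem_Ioi] at ht
    have hlin : ‖gr (AffineMap.lineMap w y t) - gr w‖ ≤ β * (t * ‖y - w‖) := by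
      simpa [← dist_eq_norm, AffineMap.lineMap_apply, norm_smul, abs_of_pos ht] using
        hlip.dist_le_mul (AffineMap.lineMap w y t) w
    nlinarith [real_inner_le_norm (gr (AffineMap.lineMap w y t) - gr w) (y - w),
      mul_le_mul_of_nonneg_right hlin (norm_nonneg (y - w))]
  have h01 : k 1 ≤ k 0 := hanti (mem_Ici.2 le_rfl) (mem_Ici.2 zero_le_one) zero_le_one
  simp only [k, AffineMap.lineMap_apply_one, AffineMap.lineMap_apply_zero] at h01
  linarith

theorem IsMinOn.inner_gradient_sub_nonneg {C : Set H} (hC : Convex ℝ C) {f : H → ℝ} {f' a : H}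
    (ha : a ∈ C) (hmin : IsMinOn f C a) (hf : HasGradientAt f f' a) :
    ∀ c ∈ C, 0 ≤ ⟪f', c - a⟫ :=
  fun _ hc ↦ hmin.localize.hasFDerivWithinAt_nonneg hf.hasFDerivAt.hasFDerivWithinAt
    (sub_mem_posTangentConeAt_of_segment_subset (hC.segment_subset ha hc))

theorem HasGradientAt.half_sq_norm_sub_add_const_mul {g : H → ℝ} {g' : H} (x a : H) (κ : ℝ)
    (hg : HasGradientAt g g' a) :
    HasGradientAt (fun y ↦ 1 / 2 * ‖y - x‖ ^ 2 + κ * g y) ((a - x) + κ • g') a := by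
  rw [hasGradientAt_iff_hasFDerivAt] at hg ⊢
  refine ((((hasFDerivAt_id a).sub_const x).norm_sq.const_mul (1 / 2)).add
    (hg.const_mul κ)).congr_fderiv ?_
  ext v
  simp

section LipschitzGradient

variable {g : H → ℝ} {gr : H → H} {β : NNReal} {κ γ : ℝ} {x : H}

theorem ConvexOn.add_inner_add_sq_le_of_lipschitzWith (hg : ConvexOn ℝ univ g)
    (hgrad : ∀ w, HasGradientAt g (gr w) w) (hlip : LipschitzWith β gr) (w y : H) :
    g w + ⟪gr w, y - w⟫ + (β : ℝ)⁻¹ / 2 * ‖gr y - gr w‖ ^ 2 ≤ g y := by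
  -- bound `g y'`, `y' := y - β⁻¹ (∇g y - ∇g w)`, below by the tangent at `w`, above by the descent
  -- lemma at `y`
  set Δ := gr y - gr w
  set y' := y - (β : ℝ)⁻¹ • Δ
  have hlow := hg.add_inner_le_of_hasGradientAt_s14 (mem_univ w) (mem_univ y') (hgrad w)
  have hup := le_add_inner_add_sq_of_lipschitzWith hgrad hlip y y'
  have hy'y : y' - y = -((β : ℝ)⁻¹ • Δ) := by simp [y']
  have hy'w : y' - w = (y - w) - (β : ℝ)⁻¹ • Δ := by simp only [y']; abel
  have hΔ : ⟪gr y, Δ⟫ - ⟪gr w, Δ⟫ = ‖Δ‖ ^ 2 := by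
    rw [← inner_sub_left, real_inner_self_eq_norm_sq]
  rw [hy'w, inner_sub_right, real_inner_smul_right] at hlow
  rw [hy'y, inner_neg_right, real_inner_smul_right, norm_neg, norm_smul, Real.norm_eq_abs,
    abs_inv, NNReal.abs_eq] at hup
  have hβ : (β : ℝ) / 2 * ((β : ℝ)⁻¹ * ‖Δ‖) ^ 2 = (β : ℝ)⁻¹ / 2 * ‖Δ‖ ^ 2 := by
    rcases eq_or_ne (β : ℝ) 0 with h | h
    · simp [h]
    · field_simp
  have hΔ' : (β : ℝ)⁻¹ * ⟪gr y, Δ⟫ - (β : ℝ)⁻¹ * ⟪gr w, Δ⟫ = (β : ℝ)⁻¹ * ‖Δ‖ ^ 2 := by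
    rw [← mul_sub, hΔ]
  linarith

theorem ConvexOn.inv_mul_sq_norm_sub_le_inner (hg : ConvexOn ℝ univ g)
    (hgrad : ∀ w, HasGradientAt g (gr w) w) (hlip : LipschitzWith β gr) (w v : H) :
    (β : ℝ)⁻¹ * ‖gr w - gr v‖ ^ 2 ≤ ⟪gr w - gr v, w - v⟫ := by
  have h₁ := hg.add_inner_add_sq_le_of_lipschitzWith hgrad hlip w v
  have h₂ := hg.add_inner_add_sq_le_of_lipschitzWith hgrad hlip v w
  rw [norm_sub_rev (gr v)] at h₁
  have hsum : ⟪gr w, v - w⟫ + ⟪gr v, w - v⟫ = -⟪gr w - gr v, w - v⟫ := by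
    rw [← neg_sub w v, inner_neg_right, inner_sub_left]; ring
  linarith

theorem ConvexOn.norm_sub_smul_gradient_sub_le_s14 (hg : ConvexOn ℝ univ g)
    (hgrad : ∀ w, HasGradientAt g (gr w) w) (hlip : LipschitzWith β gr) {τ : ℝ}
    (hτ₀ : 0 ≤ τ) (hτ : τ ≤ 2 / β) (w v : H) :
    ‖(w - v) - τ • (gr w - gr v)‖ ≤ ‖w - v‖ := by
  set Δ := gr w - gr v
  have hco := hg.inv_mul_sq_norm_sub_le_inner hgrad hlip w v
  have hexp : ‖(w - v) - τ • Δ‖ ^ 2 = ‖w - v‖ ^ 2 - 2 * τ * ⟪Δ, w - v⟫ + τ ^ 2 * ‖Δ‖ ^ 2 := by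
    rw [norm_sub_sq_real, real_inner_smul_right, norm_smul, real_inner_comm, mul_pow,
      Real.norm_eq_abs, sq_abs]
    ring
  have hquad : τ ^ 2 * ‖Δ‖ ^ 2 ≤ 2 * τ * ⟪Δ, w - v⟫ := calc
    τ ^ 2 * ‖Δ‖ ^ 2 = τ * (τ * ‖Δ‖ ^ 2) := by ring
    _ ≤ τ * (2 * ((β : ℝ)⁻¹ * ‖Δ‖ ^ 2)) := by
      rw [div_eq_mul_inv] at hτ
      have := mul_le_mul_of_nonneg_right hτ (sq_nonneg ‖Δ‖)
      exact mul_le_mul_of_nonneg_left (by linarith) hτ₀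
    _ ≤ 2 * τ * ⟪Δ, w - v⟫ := by nlinarith
  exact (pow_le_pow_iff_left₀ (norm_nonneg _) (norm_nonneg _) two_ne_zero).1 (by linarith)

theorem ConvexOn.norm_forwardStep_sub_le (hg : ConvexOn ℝ univ g)
    (hgrad : ∀ w, HasGradientAt g (gr w) w) (hlip : LipschitzWith β gr) (hκ : 0 < κ)
    (hγ₀ : 0 ≤ γ) (hγ : γ ≤ 2 / (κ * β)) (y z : H) :
    ‖forwardStep gr κ γ x y - forwardStep gr κ γ x z‖ ≤ (1 + γ)⁻¹ * ‖y - z‖ := by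
  have hγκ : γ * κ ≤ 2 / β := by
    calc γ * κ ≤ 2 / (κ * β) * κ := mul_le_mul_of_nonneg_right hγ hκ.le
      _ = 2 / β := by rw [div_mul_eq_mul_div, mul_comm, mul_div_mul_left _ _ hκ.ne']
  rw [forwardStep_sub_forwardStep, norm_smul, Real.norm_of_nonneg (by positivity)]
  gcongr
  exact hg.norm_sub_smul_gradient_sub_le_s14 hgrad hlip (by positivity) hγκ y z

/-- `xstar = prox_{ι_C + κ g} x` is a fixed point of `P_C ∘ forwardStep gr κ γ x`. -/
theorem inner_forwardStep_sub_le_zero_of_isMinOn {C : Set H} (hC : Convex ℝ C)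
    (hgrad : ∀ w, HasGradientAt g (gr w) w) (hγ₀ : 0 ≤ γ) {xstar : H} (hxstarC : xstar ∈ C)
    (hxstar : IsMinOn (fun y ↦ 1 / 2 * ‖y - x‖ ^ 2 + κ * g y) C xstar) :
    ∀ c ∈ C, ⟪forwardStep gr κ γ x xstar - xstar, c - xstar⟫ ≤ 0 := by
  intro c hc
  have hopt := hxstar.inner_gradient_sub_nonneg hC hxstarC
    ((hgrad xstar).half_sq_norm_sub_add_const_mul x xstar κ) c hc
  have hfix : forwardStep gr κ γ x xstar - xstar
      = (-(γ / (1 + γ))) • ((xstar - x) + κ • gr xstar) := by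
    simp only [forwardStep]
    match_scalars <;> field_simp
    ring
  rw [hfix, real_inner_smul_left]
  exact mul_nonpos_of_nonpos_of_nonneg (neg_nonpos.2 (by positivity)) hopt

theorem ConvexOn.norm_forwardBackward_sub_le {C : Set H} (hC : Convex ℝ C)
    (hg : ConvexOn ℝ univ g) (hgrad : ∀ w, HasGradientAt g (gr w) w)
    (hlip : LipschitzWith β gr) (hκ : 0 < κ) (hγ₀ : 0 ≤ γ) (hγ : γ ≤ 2 / (κ * β))
    {lam : ℝ} (hlam₀ : 0 ≤ lam) (hlam₁ : lam ≤ 1) {y q xstar : H} (hqC : q ∈ C)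
    (hq : IsMinOn (fun c ↦ ‖c - forwardStep gr κ γ x y‖) C q) (hxstarC : xstar ∈ C)
    (hxstar : IsMinOn (fun y ↦ 1 / 2 * ‖y - x‖ ^ 2 + κ * g y) C xstar) :
    ‖y + lam • (q - y) - xstar‖ ≤ (1 - lam * (γ / (1 + γ))) * ‖y - xstar‖ := by
  have hproj : ‖q - xstar‖ ≤ (1 + γ)⁻¹ * ‖y - xstar‖ :=
    (norm_sub_le_norm_sub_of_inner_le_zero hqC hxstarC
      (inner_sub_le_zero_of_isMinOn_norm_sub hC hqC hq)
      (inner_forwardStep_sub_le_zero_of_isMinOn hC hgrad hγ₀ hxstarC hxstar)).trans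
      (hg.norm_forwardStep_sub_le hgrad hlip hκ hγ₀ hγ y xstar)
  calc ‖y + lam • (q - y) - xstar‖ ≤ (1 - lam) * ‖y - xstar‖ + lam * ‖q - xstar‖ :=
        norm_add_smul_sub_sub_le hlam₀ hlam₁
    _ ≤ (1 - lam) * ‖y - xstar‖ + lam * ((1 + γ)⁻¹ * ‖y - xstar‖) := by gcongr
    _ = (1 - lam * (γ / (1 + γ))) * ‖y - xstar‖ := by field_simp; ring

end LipschitzGradient

end

theorem stmt_14_general {H : Type*} [NormedAddCommGroup H] [InnerProductSpace ℝ H]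
    [CompleteSpace H]
    (C : Set H) (hC_conv : Convex ℝ C)
    (g : H → ℝ) (hg_conv : ConvexOn ℝ univ g)
    (gr : H → H) (hgrad : ∀ w, HasGradientAt g (gr w) w)
    (β : NNReal) (hlip : LipschitzWith β gr)
    (κ : ℝ) (hκ : 0 < κ) (x : H)
    (γ lam : ℕ → ℝ) (γlb γub llb : ℝ)
    (hγlb : 0 < γlb) (hγ : ∀ n, γlb ≤ γ n ∧ γ n ≤ γub) (hγub : γub < 2 / (κ * β))
    (hllb : 0 < llb) (hlam : ∀ n, llb ≤ lam n ∧ lam n ≤ 1)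
    -- xstar = prox_{ι_C + κ g} x
    (xstar : H) (hxstarC : xstar ∈ C)
    (hxstar : IsMinOn (fun y => (1/2) * ‖y - x‖^2 + κ * g y) C xstar)
    (xs q : ℕ → H)
    -- q n = P_C ((x_n − γ_n (κ ∇g(x_n) − x)) / (1 + γ_n))
    (hqC : ∀ n, q n ∈ C)
    (hq : ∀ n, IsMinOn
      (fun c => ‖c - (1 + γ n)⁻¹ • (xs n - γ n • (κ • gr (xs n) - x))‖) C (q n))
    (hiter : ∀ n, xs (n+1) = xs n + lam n • (q n - xs n)) :
    ∀ n, ‖xs n - xstar‖ ≤ (1 - llb * γlb / (1 + γlb))^n * ‖xs 0 - xstar‖ := by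
  have hρ : 0 ≤ 1 - llb * γlb / (1 + γlb) := by
    have hfrac : γlb / (1 + γlb) ≤ 1 := (div_le_one (by positivity)).2 (by linarith)
    rw [mul_div_assoc, sub_nonneg]
    exact mul_le_one₀ ((hlam 0).1.trans (hlam 0).2) (by positivity) hfrac
  refine fun n ↦ le_geom (u := fun n ↦ ‖xs n - xstar‖) hρ n fun k _ ↦ ?_
  obtain ⟨hγ₁, hγ₂⟩ := hγ k
  obtain ⟨hlam₁, hlam₂⟩ := hlam k
  have hrate : llb * γlb / (1 + γlb) ≤ lam k * (γ k / (1 + γ k)) := by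
    have : γlb / (1 + γlb) ≤ γ k / (1 + γ k) := by
      rw [div_le_div_iff₀ (by positivity) (by linarith)]; linarith
    rw [mul_div_assoc]
    exact mul_le_mul hlam₁ this (by positivity) (by linarith)
  rw [hiter k]
  refine (hg_conv.norm_forwardBackward_sub_le hC_conv hgrad hlip hκ (by linarith)
    (by linarith) (by linarith) hlam₂ (hqC k) (hq k) hxstarC hxstar).trans ?_
  gcongr

/-- Linear convergence of the forward–backward iteration computing
`prox_{ι_C + κ g} x`. -/
theorem stmt_14 {H : Type*} [NormedAddCommGroup H] [InnerProductSpace ℝ H]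
    [CompleteSpace H]
    (C : Set H) (hC_closed : IsClosed C) (hC_conv : Convex ℝ C) (hC_ne : C.Nonempty)
    (g : H → ℝ) (hg_conv : ConvexOn ℝ univ g)
    (gr : H → H) (hgrad : ∀ w, HasGradientAt g (gr w) w)
    (β : NNReal) (hβ : 0 < (β:ℝ)) (hlip : LipschitzWith β gr)
    (κ : ℝ) (hκ : 0 < κ) (x : H)
    (γ lam : ℕ → ℝ) (γlb γub llb : ℝ)
    (hγlb : 0 < γlb) (hγ : ∀ n, γlb ≤ γ n ∧ γ n ≤ γub) (hγub : γub < 2 / (κ * β))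
    (hllb : 0 < llb) (hlam : ∀ n, llb ≤ lam n ∧ lam n ≤ 1)
    -- xstar = prox_{ι_C + κ g} x
    (xstar : H) (hxstarC : xstar ∈ C)
    (hxstar : IsMinOn (fun y => (1/2) * ‖y - x‖^2 + κ * g y) C xstar)
    (xs q : ℕ → H)
    -- q n = P_C ((x_n − γ_n (κ ∇g(x_n) − x)) / (1 + γ_n))
    (hqC : ∀ n, q n ∈ C)
    (hq : ∀ n, IsMinOn
      (fun c => ‖c - (1 + γ n)⁻¹ • (xs n - γ n • (κ • gr (xs n) - x))‖) C (q n))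
    (hiter : ∀ n, xs (n+1) = xs n + lam n • (q n - xs n)) :
    ∀ n, ‖xs n - xstar‖ ≤ (1 - llb * γlb / (1 + γlb))^n * ‖xs 0 - xstar‖ :=
  stmt_14_general C hC_conv g hg_conv gr hgrad β hlip κ hκ x γ lam γlb γub llb hγlb hγ hγub hllb
    hlam xstar hxstarC hxstar xs q hqC hq hiter
end

section
/- Let (o_k)_{k∈K} be an orthonormal basis of a real separable Hilbert space H indexed by a finite set K, let φ_k ∈ Γ₀(ℝ), let C_k ⊂ ℝ be closed intervals with C_k ∩ dom φ_k ≠ ∅, and set f(x) = Σ_k φ_k(⟨x,o_k⟩) and C = {x : ⟨x,o_k⟩ ∈ C_k for all k}. Then prox_{ι_C+f}x = Σ_k π_k o_k, where π_k = inf C_k if prox_{φ_k}⟨x,o_k⟩ < inf C_k, π_k = sup C_k if prox_{φ_k}⟨x,o_k⟩ > sup C_k, and π_k = prox_{φ_k}⟨x,o_k⟩ otherwise. -/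
open Set
open scoped RealInnerProductSpace

private lemma convex_min_mono {F : ℝ → ℝ} (hF : ConvexOn ℝ univ F) {t u s : ℝ}
    (hmin : ∀ r, F t ≤ F r) (h1 : t ≤ u) (h2 : u ≤ s) : F u ≤ F s := by
  have hmem : u ∈ segment ℝ t s := by
    rw [segment_eq_Icc (h1.trans h2)]; exact ⟨h1, h2⟩
  obtain ⟨lam, mu, hlam, hmu, hsum, heq⟩ := hmem
  have hle := hF.2 (mem_univ t) (mem_univ s) hlam hmu hsum
  simp only [smul_eq_mul] at hle heq
  rw [← heq]
  have h3 := hmin s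
  have h4 : lam * F t + mu * F s ≤ F s := by
    calc lam * F t + mu * F s ≤ lam * F s + mu * F s := by
          nlinarith [mul_le_mul_of_nonneg_left h3 hlam]
      _ = F s := by rw [← add_mul, hsum, one_mul]
  linarith

private lemma convex_min_anti {F : ℝ → ℝ} (hF : ConvexOn ℝ univ F) {t u s : ℝ}
    (hmin : ∀ r, F t ≤ F r) (h1 : s ≤ u) (h2 : u ≤ t) : F u ≤ F s := by
  have hmem : u ∈ segment ℝ s t := by
    rw [segment_eq_Icc (h1.trans h2)]; exact ⟨h1, h2⟩
  obtain ⟨lam, mu, hlam, hmu, hsum, heq⟩ := hmem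
  have hle := hF.2 (mem_univ s) (mem_univ t) hlam hmu hsum
  simp only [smul_eq_mul] at hle heq
  rw [← heq]
  have h3 := hmin s
  have h4 : lam * F s + mu * F t ≤ F s := by
    calc lam * F s + mu * F t ≤ lam * F s + mu * F s := by
          nlinarith [mul_le_mul_of_nonneg_left h3 hmu]
      _ = F s := by rw [← add_mul, hsum, one_mul]
  linarith

private lemma quad_convex (c : ℝ) : ConvexOn ℝ univ (fun s : ℝ => (1/2) * (s - c)^2) := by
  refine ⟨convex_univ, fun u _ v _ lam mu hlam hmu hsum => ?_⟩
  simp only [smul_eq_mul]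
  have hmu' : mu = 1 - lam := by linarith
  subst hmu'
  nlinarith [mul_nonneg (mul_nonneg hlam hmu) (sq_nonneg (u - v))]

/-- Separable case: for `f(x) = Σ φ_k ⟨x, o_k⟩` and `C = {x : ⟨x,o_k⟩ ∈ [a_k, b_k]}`,
the proximity operator of `ι_C + f` acts coordinatewise by clipping `prox_{φ_k}`. -/
theorem stmt_17 {H : Type*} [NormedAddCommGroup H] [InnerProductSpace ℝ H]
    [CompleteSpace H] {ι : Type*} [Fintype ι]
    (o : OrthonormalBasis ι ℝ H)
    (φ : ι → ℝ → ℝ)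
    (hφ_conv : ∀ k, ConvexOn ℝ univ (φ k)) (hφ_lsc : ∀ k, LowerSemicontinuous (φ k))
    (a b : ι → ℝ) (hab : ∀ k, a k ≤ b k)
    (x : H) (t : ι → ℝ)
    -- t k = prox_{φ k} ⟨x, o k⟩
    (ht : ∀ k, IsMinOn (fun s => (1/2) * (s - ⟪x, o k⟫)^2 + φ k s) univ (t k))
    (π : ι → ℝ)
    (hπ : ∀ k, π k = if t k < a k then a k else if b k < t k then b k else t k) :
    (∑ k, π k • o k) ∈ {y : H | ∀ k, ⟪y, o k⟫ ∈ Icc (a k) (b k)} ∧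
    IsMinOn (fun y => (1/2) * ‖y - x‖^2 + ∑ k, φ k ⟪y, o k⟫)
      {y : H | ∀ k, ⟪y, o k⟫ ∈ Icc (a k) (b k)} (∑ k, π k • o k) := by
  -- coordinates of the candidate point
  classical
  have hcoord : ∀ j, ⟪∑ k, π k • o k, o j⟫ = π j := by
    intro j
    rw [sum_inner]
    have horth := orthonormal_iff_ite.mp o.orthonormal
    simp only [real_inner_smul_left, horth]
    simp [Finset.sum_ite_eq']
  -- norm squared identity
  have hnorm : ∀ v : H, ‖v‖^2 = ∑ k, (⟪v, o k⟫)^2 := by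
    intro v
    have := o.sum_inner_mul_inner v v
    rw [real_inner_self_eq_norm_sq] at this
    rw [← this]
    congr 1; funext k
    rw [real_inner_comm (o k) v, sq]
  -- objective as a sum of per-coordinate functions
  set g : ι → ℝ → ℝ := fun k s => (1/2) * (s - ⟪x, o k⟫)^2 + φ k s with hg
  have hobj : ∀ y : H, (1/2) * ‖y - x‖^2 + ∑ k, φ k ⟪y, o k⟫ = ∑ k, g k ⟪y, o k⟫ := by
    intro y
    rw [hnorm (y - x), Finset.mul_sum, ← Finset.sum_add_distrib]
    congr 1; funext k
    rw [inner_sub_left]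
  -- per-coordinate convexity
  have hgconv : ∀ k, ConvexOn ℝ univ (g k) := fun k => (quad_convex _).add (hφ_conv k)
  have hgmin : ∀ k, ∀ r, g k (t k) ≤ g k r := by
    intro k r
    exact (ht k) (mem_univ r)
  -- membership of π k in the interval
  have hπmem : ∀ k, π k ∈ Icc (a k) (b k) := by
    intro k
    rw [hπ]
    split_ifs with h1 h2
    · exact ⟨le_refl _, hab k⟩
    · exact ⟨hab k, le_refl _⟩
    · exact ⟨not_lt.mp h1, not_lt.mp h2⟩
  -- per-coordinate minimality on the interval
  have hkey : ∀ k, ∀ s ∈ Icc (a k) (b k), g k (π k) ≤ g k s := by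
    intro k s hs
    rw [hπ]
    split_ifs with h1 h2
    · exact convex_min_mono (hgconv k) (hgmin k) h1.le hs.1
    · exact convex_min_anti (hgconv k) (hgmin k) hs.2 h2.le
    · exact hgmin k s
  constructor
  · intro k
    rw [hcoord k]; exact hπmem k
  · intro y hy
    simp only [mem_setOf_eq] at hy ⊢
    rw [hobj, hobj]
    apply Finset.sum_le_sum
    intro k _
    rw [hcoord k]
    exact hkey k _ (hy k)
end
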